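/- arXiv:2010.05059 — 8 statements merged into one kernel-verified Lean document; each statement's English description precedes it below -/
import Mathlib

section
/- Let X, X', Y, Y' be integer-valued random variables such that X' and Y' take values in {0,1}, X stochastically dominates Y, and for every integer x, the conditional distribution of X' given X = x stochastically dominates the conditional distribution of Y' given Y = x. Then X + X' stochastically dominates Y + Y'. -/
/-!
Write `p = Pr[X ≥ x]`, `P = Pr[X = x - 1]` and `a = Pr[X' = 1 | X = x - 1]`, and likewise
`q, Q, b` for `Y, Y'`. Then `Pr[X + X' ≥ x] = p + a P` and `Pr[Y + Y' ≥ x] = q + b Q`, while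
domination at `x` and at `x - 1` gives `q ≤ p` and `q + Q ≤ p + P`. Since `b ≤ a ≤ 1`,
`q + b Q ≤ (1 - a) q + a (q + Q) ≤ (1 - a) p + a (p + P) = p + a P`.
-/

open MeasureTheory

open scoped ENNReal

theorem ENNReal.add_le_add_of_le_mul_of_mul_le {p q P Q A B a : ℝ≥0∞}
    (hqp : q ≤ p) (hsum : q + Q ≤ p + P) (ha : a ≤ 1) (hB : B ≤ a * Q) (hA : a * P ≤ A) :
    q + B ≤ p + A := by
  have hq : q = (1 - a) * q + a * q := by rw [← add_mul, tsub_add_cancel_of_le ha, one_mul]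
  have hp : p = (1 - a) * p + a * p := by rw [← add_mul, tsub_add_cancel_of_le ha, one_mul]
  calc q + B ≤ q + a * Q := by gcongr
    _ = (1 - a) * q + a * (q + Q) := by rw [mul_add, ← add_assoc, ← hq]
    _ ≤ (1 - a) * p + a * (p + P) := by gcongr
    _ = p + a * P := by rw [mul_add, ← add_assoc, ← hp]
    _ ≤ p + A := by gcongr

section IntegerValued

variable {Ω : Type*} [MeasurableSpace Ω] (μ : Measure Ω) {Z : Ω → ℤ}

theorem measure_le_add_of_zero_or_one (hZ : Measurable Z) {ε : Ω → ℤ}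
    (hε : ∀ ω, ε ω = 0 ∨ ε ω = 1) (x : ℤ) :
    μ {ω | x ≤ Z ω + ε ω} = μ {ω | x ≤ Z ω} + μ {ω | Z ω = x - 1 ∧ ε ω = 1} := by
  have hunion : {ω | x ≤ Z ω + ε ω} = {ω | x ≤ Z ω} ∪ {ω | Z ω = x - 1 ∧ ε ω = 1} := by
    ext ω
    rcases hε ω with h | h
    · simp [h]
    · simp only [Set.mem_ofPred_eq, h, Set.mem_union, and_true]
      omega
  rw [hunion, measure_union' _ (measurableSet_le measurable_const hZ)]
  exact Set.disjoint_left.mpr fun ω (h₁ : x ≤ Z ω) (h₂ : Z ω = x - 1 ∧ ε ω = 1) => by omega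

theorem measure_sub_one_le (hZ : Measurable Z) (x : ℤ) :
    μ {ω | x - 1 ≤ Z ω} = μ {ω | x ≤ Z ω} + μ {ω | Z ω = x - 1} := by
  have hunion : {ω | x - 1 ≤ Z ω} = {ω | x ≤ Z ω} ∪ {ω | Z ω = x - 1} := by
    ext ω
    simp only [Set.mem_ofPred_eq, Set.mem_union]
    omega
  rw [hunion, measure_union' _ (measurableSet_le measurable_const hZ)]
  exact Set.disjoint_left.mpr fun ω (h₁ : x ≤ Z ω) (h₂ : Z ω = x - 1) => by omega

end IntegerValued

theorem stmt_0_general {Ω₁ Ω₂ : Type*} [MeasurableSpace Ω₁] [MeasurableSpace Ω₂]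
    (μ : Measure Ω₁) (ν : Measure Ω₂) [IsProbabilityMeasure μ] [IsProbabilityMeasure ν]
    (X X' : Ω₁ → ℤ) (Y Y' : Ω₂ → ℤ)
    (hXm : Measurable X) (hYm : Measurable Y)
    (hX' : ∀ ω, X' ω = 0 ∨ X' ω = 1) (hY' : ∀ ω, Y' ω = 0 ∨ Y' ω = 1)
    (hdom : ∀ x : ℤ, ν {ω | x ≤ Y ω} ≤ μ {ω | x ≤ X ω})
    (hcond : ∀ x : ℤ, μ {ω | X ω = x} ≠ 0 → ν {ω | Y ω = x} ≠ 0 →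
      ν {ω | Y ω = x ∧ Y' ω = 1} / ν {ω | Y ω = x} ≤
        μ {ω | X ω = x ∧ X' ω = 1} / μ {ω | X ω = x}) :
    ∀ x : ℤ, ν {ω | x ≤ Y ω + Y' ω} ≤ μ {ω | x ≤ X ω + X' ω} := by
  intro x
  rw [measure_le_add_of_zero_or_one μ hXm hX', measure_le_add_of_zero_or_one ν hYm hY']
  have hsum := hdom (x - 1)
  rw [measure_sub_one_le μ hXm, measure_sub_one_le ν hYm] at hsum
  have hAP : μ {ω | X ω = x - 1 ∧ X' ω = 1} ≤ μ {ω | X ω = x - 1} := measure_mono fun _ h => h.1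
  have hBQ : ν {ω | Y ω = x - 1 ∧ Y' ω = 1} ≤ ν {ω | Y ω = x - 1} := measure_mono fun _ h => h.1
  by_cases hP : μ {ω | X ω = x - 1} = 0
  · -- `a = 1` works when the conditional law of `X'` is undefined.
    exact ENNReal.add_le_add_of_le_mul_of_mul_le (hdom x) hsum le_rfl (by rwa [one_mul])
      (by simp [hP])
  refine ENNReal.add_le_add_of_le_mul_of_mul_le (hdom x) hsum
    (ENNReal.div_le_of_le_mul (by rwa [one_mul])) ?_ (ENNReal.div_mul_cancel hP (by finiteness)).le
  by_cases hQ : ν {ω | Y ω = x - 1} = 0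
  · simp [nonpos_iff_eq_zero.mp (hQ ▸ hBQ)]
  calc _ = ν {ω | Y ω = x - 1 ∧ Y' ω = 1} / ν {ω | Y ω = x - 1} * ν {ω | Y ω = x - 1} :=
        (ENNReal.div_mul_cancel hQ (by finiteness)).symm
    _ ≤ _ := mul_le_mul_left (hcond (x - 1) hP hQ) _

theorem stmt_0 {Ω₁ Ω₂ : Type*} [MeasurableSpace Ω₁] [MeasurableSpace Ω₂]
    (μ : Measure Ω₁) (ν : Measure Ω₂) [IsProbabilityMeasure μ] [IsProbabilityMeasure ν]
    (X X' : Ω₁ → ℤ) (Y Y' : Ω₂ → ℤ)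
    (hXm : Measurable X) (hX'm : Measurable X') (hYm : Measurable Y) (hY'm : Measurable Y')
    (hX' : ∀ ω, X' ω = 0 ∨ X' ω = 1) (hY' : ∀ ω, Y' ω = 0 ∨ Y' ω = 1)
    (hdom : ∀ x : ℤ, ν {ω | x ≤ Y ω} ≤ μ {ω | x ≤ X ω})
    (hcond : ∀ x : ℤ, μ {ω | X ω = x} ≠ 0 → ν {ω | Y ω = x} ≠ 0 →
      ν {ω | Y ω = x ∧ Y' ω = 1} / ν {ω | Y ω = x} ≤
        μ {ω | X ω = x ∧ X' ω = 1} / μ {ω | X ω = x}) :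
    ∀ x : ℤ, ν {ω | x ≤ Y ω + Y' ω} ≤ μ {ω | x ≤ X ω + X' ω} :=
  stmt_0_general μ ν X X' Y Y' hXm hYm hX' hY' hdom hcond
end

section
/- Let B_1, ..., B_k be (not necessarily independent) Bernoulli random variables such that for all t and all integers x, Pr[B_t = 1 | B_1 + ... + B_{t-1} = x] ≤ p whenever this conditional probability is defined. Then the sum B_1 + ... + B_k is stochastically dominated by a binomial random variable with k trials and success probability p. -/
/-!
Write `S t = B 0 + ⋯ + B (t - 1)` and induct on `k`. Since `B k ≤ 1`, reaching `j + 1` at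
time `k + 1` means either having reached `j + 1` already at time `k`, or sitting exactly at `j`
and then drawing `B k = 1`, which by hypothesis costs a factor `p`. Hence the tail
`μ {j + 1 ≤ S (k + 1)}` is at most `(1 - p) μ {j + 1 ≤ S k} + p μ {j ≤ S k}`, and Pascal's rule
shows that the binomial tail satisfies this recurrence with equality.
-/

open MeasureTheory Finset

noncomputable def binomialTerm (p : ENNReal) (k i : ℕ) : ENNReal :=
  (k.choose i : ENNReal) * p ^ i * (1 - p) ^ (k - i)

noncomputable def binomialTail (p : ENNReal) (k j : ℕ) : ENNReal :=
  ∑ i ∈ Icc j k, binomialTerm p k i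

lemma binomialTerm_of_lt {p : ENNReal} {k i : ℕ} (h : k < i) : binomialTerm p k i = 0 := by
  simp [binomialTerm, Nat.choose_eq_zero_of_lt h]

lemma binomialTerm_succ_succ (p : ENNReal) (k i : ℕ) :
    binomialTerm p (k + 1) (i + 1) =
      p * binomialTerm p k i + (1 - p) * binomialTerm p k (i + 1) := by
  rcases lt_or_ge i k with hik | hki
  · obtain ⟨d, rfl⟩ := Nat.exists_eq_add_of_lt hik
    simp only [binomialTerm, Nat.choose_succ_succ, Nat.cast_add,
      show i + d + 1 + 1 - (i + 1) = d + 1 by omega, show i + d + 1 - i = d + 1 by omega,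
      show i + d + 1 - (i + 1) = d by omega]
    ring
  · rcases hki.eq_or_lt with rfl | hki
    · simp [binomialTerm, pow_succ, mul_comm]
    · simp [binomialTerm_of_lt hki, binomialTerm_of_lt (Nat.succ_lt_succ hki),
        binomialTerm_of_lt (hki.trans (Nat.lt_succ_self i))]

lemma binomialTail_eq_sum_Icc {p : ENNReal} {k n : ℕ} (hkn : k ≤ n) (j : ℕ) :
    binomialTail p k j = ∑ i ∈ Icc j n, binomialTerm p k i :=
  sum_subset (Icc_subset_Icc_right hkn) fun _ hi hik =>
    binomialTerm_of_lt (by simp only [mem_Icc] at hi hik; omega)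

lemma binomialTail_zero_right {p : ENNReal} (hp : p ≤ 1) (k : ℕ) : binomialTail p k 0 = 1 := by
  calc binomialTail p k 0 = (p + (1 - p)) ^ k := by
        rw [add_pow, binomialTail, ← Nat.range_succ_eq_Icc_zero]
        exact sum_congr rfl fun i _ => by simp only [binomialTerm]; ring
    _ = 1 := by rw [add_tsub_cancel_of_le hp, one_pow]

lemma binomialTail_succ_succ (p : ENNReal) (k j : ℕ) :
    binomialTail p (k + 1) (j + 1) =
      (1 - p) * binomialTail p k (j + 1) + p * binomialTail p k j := by
  rw [binomialTail_eq_sum_Icc (Nat.le_succ k) (j + 1), binomialTail, binomialTail,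
    mul_sum, mul_sum, ← map_add_right_Icc j k 1, sum_map, sum_map, ← sum_add_distrib]
  exact sum_congr rfl fun i _ => by
    simp only [addRightEmbedding_apply, binomialTerm_succ_succ]; ring

section

variable {Ω : Type*} [MeasurableSpace Ω] {μ : Measure Ω}

lemma measure_le_mul_of_div_le [IsFiniteMeasure μ] {p : ENNReal} {E C : Set Ω} (hEC : E ⊆ C)
    (h : μ C ≠ 0 → μ E / μ C ≤ p) : μ E ≤ p * μ C := by
  by_cases hC : μ C = 0
  · simp [measure_mono_null hEC hC]
  · exact (ENNReal.div_le_iff hC (measure_ne_top μ C)).1 (h hC)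

lemma measure_succ_le_add_le {p : ENNReal} (hp : p ≤ 1) {S X : Ω → ℕ} (hS : Measurable S)
    (hX : ∀ ω, X ω ≤ 1) (j : ℕ)
    (hjump : μ {ω | X ω = 1 ∧ S ω = j} ≤ p * μ {ω | S ω = j}) :
    μ {ω | j + 1 ≤ S ω + X ω} ≤
      (1 - p) * μ {ω | j + 1 ≤ S ω} + p * μ {ω | j ≤ S ω} := by
  have hcover :
      {ω | j + 1 ≤ S ω + X ω} ⊆ {ω | j + 1 ≤ S ω} ∪ {ω | X ω = 1 ∧ S ω = j} := by
    intro ω hω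
    have := hX ω
    simp only [Set.mem_union, Set.mem_ofPred] at hω ⊢
    omega
  have hsplit : μ {ω | j ≤ S ω} = μ {ω | j + 1 ≤ S ω} + μ {ω | S ω = j} := by
    have hlevel : MeasurableSet {ω | S ω = j} := hS (measurableSet_singleton j)
    rw [← measure_union _ hlevel]
    · congr 1; ext ω; simp only [Set.mem_union, Set.mem_ofPred]; omega
    · exact Set.disjoint_left.2 fun ω h1 h2 => by simp only [Set.mem_ofPred] at h1 h2; omega
  calc μ {ω | j + 1 ≤ S ω + X ω}
      ≤ μ {ω | j + 1 ≤ S ω} + μ {ω | X ω = 1 ∧ S ω = j} :=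
        (measure_mono hcover).trans (measure_union_le _ _)
    _ ≤ μ {ω | j + 1 ≤ S ω} + p * μ {ω | S ω = j} := by gcongr
    _ = (1 - p) * μ {ω | j + 1 ≤ S ω} + p * μ {ω | j ≤ S ω} := by
      rw [hsplit, mul_add, ← add_assoc, ← add_mul, tsub_add_cancel_of_le hp, one_mul]

lemma measure_le_sum_range_le_binomialTail [IsProbabilityMeasure μ] {p : ENNReal} (hp : p ≤ 1)
    {B : ℕ → Ω → ℕ} (hmeas : ∀ t, Measurable (B t)) (hB : ∀ t ω, B t ω ≤ 1)
    (k : ℕ)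
    (hjump : ∀ t < k, ∀ x : ℕ, μ {ω | B t ω = 1 ∧ ∑ s ∈ range t, B s ω = x} ≤
      p * μ {ω | ∑ s ∈ range t, B s ω = x}) (j : ℕ) :
    μ {ω | j ≤ ∑ s ∈ range k, B s ω} ≤ binomialTail p k j := by
  induction k generalizing j with
  | zero => cases j <;> simp [binomialTail_zero_right hp]
  | succ k ih =>
    rcases j with _ | j
    · exact binomialTail_zero_right hp _ ▸ prob_le_one
    have ih' := ih fun t ht => hjump t (ht.trans k.lt_succ_self)
    simp only [sum_range_succ]
    calc μ {ω | j + 1 ≤ ∑ s ∈ range k, B s ω + B k ω}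
        ≤ (1 - p) * μ {ω | j + 1 ≤ ∑ s ∈ range k, B s ω} +
            p * μ {ω | j ≤ ∑ s ∈ range k, B s ω} :=
          measure_succ_le_add_le hp (Finset.measurable_sum _ fun t _ => hmeas t) (hB k) j
            (hjump k k.lt_succ_self j)
      _ ≤ (1 - p) * binomialTail p k (j + 1) + p * binomialTail p k j := by
          gcongr <;> apply ih'
      _ = binomialTail p (k + 1) (j + 1) := (binomialTail_succ_succ p k j).symm

end

theorem stmt_1 {Ω : Type*} [MeasurableSpace Ω] (μ : Measure Ω) [IsProbabilityMeasure μ]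
    (k : ℕ) (p : ENNReal) (hp : p ≤ 1) (B : ℕ → Ω → ℕ)
    (hmeas : ∀ t, Measurable (B t))
    (hB : ∀ t ω, B t ω = 0 ∨ B t ω = 1)
    (hcond : ∀ t < k, ∀ x : ℕ,
      μ {ω | ∑ s ∈ Finset.range t, B s ω = x} ≠ 0 →
      μ {ω | B t ω = 1 ∧ ∑ s ∈ Finset.range t, B s ω = x} /
        μ {ω | ∑ s ∈ Finset.range t, B s ω = x} ≤ p) :
    ∀ j : ℕ, μ {ω | j ≤ ∑ s ∈ Finset.range k, B s ω} ≤
      ∑ i ∈ Finset.Icc j k, (k.choose i : ENNReal) * p ^ i * (1 - p) ^ (k - i) :=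
  measure_le_sum_range_le_binomialTail hp hmeas
    (fun t ω => by rcases hB t ω with h | h <;> omega) k
    (fun t ht x => measure_le_mul_of_div_le (fun _ hω => hω.2) (hcond t ht x))
end

section
/- Let P_1, ..., P_k and R_1, ..., R_k be {0,1}-valued random variables satisfying: Pr[P_t = 1 | P_1, ..., P_{t-1}] ≤ (m - (P_1 + ... + P_{t-1}))/(N - t + 1) and Pr[R_t = 1 | R_1, ..., R_{t-1}] = (m - (R_1 + ... + R_{t-1}))/(N - t + 1) for all t ≤ k. Then R_1 + ... + R_k stochastically dominates P_1 + ... + P_k. -/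
/-!
Let `reachProb p x t r j` be the probability that a counter standing at `j` at time `t`, and
incremented at each time `t'` with probability `p t' j'` given its current value `j'`, reaches
`x` within `r` more steps. With `p` the hypergeometric rate `(m - j) / (N - t)` (clipped to
`[0, 1]`, which the conditional probabilities respect anyway) this is the tail of
`R_0 + ⋯ + R_{k-1}`. Since `reachProb` is monotone in `j`, the quantity
`E[reachProb p x t (k - t) (P_0 + ⋯ + P_{t-1})]` changes at step `t` by the excess of
`Pr[P_t = 1 | history]` over `p t j` times a nonnegative increment of `reachProb`: it is
nonincreasing along `P` and constant along `R`, and at `t = k` it equals `Pr[x ≤ ∑ P_t]`.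
-/

open MeasureTheory Finset

lemma le_mul_projIcc_of_div_le {a b q : ℝ} (ha : 0 ≤ a) (hab : a ≤ b) (h : b ≠ 0 → a / b ≤ q) :
    a ≤ b * Set.projIcc 0 1 zero_le_one q := by
  rcases eq_or_ne b 0 with rfl | hb
  · simp [le_antisymm hab ha]
  have hb' : 0 < b := (ha.trans hab).lt_of_ne hb.symm
  have hmem : a / b ∈ Set.Icc (0 : ℝ) 1 := ⟨div_nonneg ha hb'.le, div_le_one_of_le₀ hab hb'.le⟩
  calc a = b * (a / b) := (mul_div_cancel₀ a hb).symm
    _ = b * Set.projIcc 0 1 zero_le_one (a / b) := by rw [Set.projIcc_of_mem _ hmem]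
    _ ≤ b * Set.projIcc 0 1 zero_le_one q :=
      mul_le_mul_of_nonneg_left (Subtype.coe_le_coe.2 (Set.monotone_projIcc _ (h hb))) hb'.le

lemma eq_mul_projIcc_of_div_eq {a b q : ℝ} (ha : 0 ≤ a) (hab : a ≤ b) (h : b ≠ 0 → a / b = q) :
    a = b * Set.projIcc 0 1 zero_le_one q := by
  rcases eq_or_ne b 0 with rfl | hb
  · simp [le_antisymm hab ha]
  have hb' : 0 < b := (ha.trans hab).lt_of_ne hb.symm
  have hmem : a / b ∈ Set.Icc (0 : ℝ) 1 := ⟨div_nonneg ha hb'.le, div_le_one_of_le₀ hab hb'.le⟩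
  rw [← h hb, Set.projIcc_of_mem _ hmem, mul_div_cancel₀ a hb]

noncomputable def reachProb (p : ℕ → ℕ → ℝ) (x : ℕ) : ℕ → ℕ → ℕ → ℝ
  | _, 0, j => if x ≤ j then 1 else 0
  | t, r + 1, j =>
    p t j * reachProb p x (t + 1) r (j + 1) + (1 - p t j) * reachProb p x (t + 1) r j

lemma reachProb_le_succ {p : ℕ → ℕ → ℝ} (hp : ∀ t j, p t j ∈ Set.Icc 0 1) (x t r j : ℕ) :
    reachProb p x t r j ≤ reachProb p x t r (j + 1) := by
  induction r generalizing t j with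
  | zero =>
    simp only [reachProb]
    split_ifs <;> norm_num; omega
  | succ r ih =>
    have h₀ := ih (t + 1) j
    have h₁ := ih (t + 1) (j + 1)
    obtain ⟨ha₀, ha₁⟩ := hp t j
    obtain ⟨hb₀, hb₁⟩ := hp t (j + 1)
    simp only [reachProb]
    nlinarith [mul_le_mul_of_nonneg_left h₁ hb₀, mul_le_mul_of_nonneg_left h₀ (sub_nonneg.2 ha₁)]

lemma sum_range_ite_mem_eq_card {S : Finset ℕ} {t : ℕ} (hS : S ⊆ range t) :
    ∑ s ∈ range t, (((if s ∈ S then 1 else 0 : ℕ)) : ℝ) = #S := by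
  push_cast
  rw [sum_boole, filter_mem_eq_inter, inter_eq_right.2 hS]

section PathSet

variable {Ω : Type*} {P : ℕ → Ω → ℕ} {t : ℕ} {S : Finset ℕ}

def pathSet (P : ℕ → Ω → ℕ) (t : ℕ) (S : Finset ℕ) : Set Ω :=
  {ω | ∀ s < t, P s ω = if s ∈ S then 1 else 0}

lemma measurableSet_pathSet [MeasurableSpace Ω] (hP : ∀ s, Measurable (P s)) (t : ℕ)
    (S : Finset ℕ) : MeasurableSet (pathSet P t S) := by
  simp only [pathSet, Set.ofPred_forall]
  exact .iInter fun s => .iInter fun _ => hP s (measurableSet_singleton _)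

@[simp]
lemma pathSet_zero (P : ℕ → Ω → ℕ) (S : Finset ℕ) : pathSet P 0 S = Set.univ := by
  simp [pathSet]

lemma pathSet_succ_insert (hS : S ⊆ range t) :
    pathSet P (t + 1) (insert t S) = pathSet P t S ∩ {ω | P t ω = 1} := by
  have htS : t ∉ S := fun h => by simpa using hS h
  ext ω
  simp only [pathSet, Set.mem_inter_iff, Set.mem_ofPred_eq, Nat.forall_lt_succ_right, mem_insert,
    true_or, if_true]
  refine and_congr_left' (forall₂_congr fun s hs => ?_)
  rw [if_congr (or_iff_right (by omega)) rfl rfl]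

lemma pathSet_succ (hP01 : ∀ t ω, P t ω = 0 ∨ P t ω = 1) (hS : S ⊆ range t) :
    pathSet P (t + 1) S = pathSet P t S \ {ω | P t ω = 1} := by
  have htS : t ∉ S := fun h => by simpa using hS h
  ext ω
  simp only [pathSet, Set.mem_sdiff, Set.mem_ofPred_eq, Nat.forall_lt_succ_right, if_neg htS]
  refine and_congr_right' ?_
  have := hP01 t ω
  omega

lemma mem_pathSet_iff (hP01 : ∀ t ω, P t ω = 0 ∨ P t ω = 1) (hS : S ⊆ range t) {ω : Ω} :
    ω ∈ pathSet P t S ↔ (range t).filter (P · ω = 1) = S := by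
  simp only [pathSet, Set.mem_ofPred_eq, Finset.ext_iff, mem_filter, mem_range]
  refine ⟨fun h s => ?_, fun h s hs => ?_⟩
  · by_cases hs : s < t
    · have := h s hs
      split_ifs at this <;> simp_all
    · simp only [hs, false_and, false_iff]
      exact fun h' => hs (mem_range.1 (hS h'))
  · have := h s
    have := hP01 s ω
    split_ifs <;> simp_all

lemma sum_eq_card_of_mem_pathSet (hS : S ⊆ range t) {ω : Ω} (hω : ω ∈ pathSet P t S) :
    ∑ s ∈ range t, P s ω = #S := by
  rw [sum_congr rfl fun s hs => hω s (mem_range.1 hs), sum_boole, filter_mem_eq_inter,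
    inter_eq_right.2 hS, Nat.cast_id]

variable [MeasurableSpace Ω] (μ : Measure Ω)

lemma measure_pathSet_eq_add (hP : ∀ s, Measurable (P s)) (hP01 : ∀ t ω, P t ω = 0 ∨ P t ω = 1)
    (hS : S ⊆ range t) :
    μ (pathSet P t S) = μ (pathSet P (t + 1) S) + μ (pathSet P (t + 1) (insert t S)) := by
  rw [pathSet_succ hP01 hS, pathSet_succ_insert hS]
  exact (measure_sdiff_add_inter _ (hP t (measurableSet_singleton 1))).symm

lemma measure_sum_ge_eq_sum_pathSet (hP : ∀ s, Measurable (P s))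
    (hP01 : ∀ t ω, P t ω = 0 ∨ P t ω = 1) (k x : ℕ) :
    μ {ω | x ≤ ∑ t ∈ range k, P t ω} =
      ∑ S ∈ (range k).powerset with x ≤ #S, μ (pathSet P k S) := by
  set f : Ω → Finset ℕ := fun ω => (range k).filter (P · ω = 1)
  have hfiber : ∀ S ∈ (range k).powerset, f ⁻¹' {S} = pathSet P k S := fun S hS => by
    ext ω
    exact (mem_pathSet_iff hP01 (mem_powerset.1 hS)).symm
  have hsum : ∀ ω, ∑ t ∈ range k, P t ω = #(f ω) := fun ω =>
    sum_eq_card_of_mem_pathSet (filter_subset _ _)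
      ((mem_pathSet_iff hP01 (filter_subset _ _)).2 rfl)
  rw [sum_congr rfl fun S hS => by rw [← hfiber S (mem_filter.1 hS).1],
    sum_measure_preimage_singleton _ fun S hS => by
      rw [hfiber S (mem_filter.1 hS).1]; exact measurableSet_pathSet hP k S]
  congr 1
  ext ω
  simp [hsum, f, filter_subset]

lemma sum_powerset_succ [IsFiniteMeasure μ] (hP : ∀ s, Measurable (P s))
    (hP01 : ∀ t ω, P t ω = 0 ∨ P t ω = 1) (g : ℕ → ℝ) (t : ℕ) :
    ∑ S ∈ (range (t + 1)).powerset, (μ (pathSet P (t + 1) S)).toReal * g #S =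
      ∑ S ∈ (range t).powerset, ((μ (pathSet P t S)).toReal * g #S +
        (μ (pathSet P (t + 1) (insert t S))).toReal * (g (#S + 1) - g #S)) := by
  have hnotMem : ∀ S ∈ (range t).powerset, t ∉ S := fun S hS h => by
    simpa using mem_powerset.1 hS h
  rw [range_add_one, powerset_insert, sum_union, sum_image, ← sum_add_distrib]
  · refine sum_congr rfl fun S hS => ?_
    rw [measure_pathSet_eq_add μ hP hP01 (mem_powerset.1 hS),
      ENNReal.toReal_add (measure_ne_top μ _) (measure_ne_top μ _),
      card_insert_of_notMem (hnotMem S hS)]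
    ring
  · intro S hS S' hS' h
    rw [← erase_insert (hnotMem S hS), ← erase_insert (hnotMem S' hS'), h]
  · refine disjoint_left.2 fun S hS hS' => ?_
    obtain ⟨S', -, rfl⟩ := mem_image.1 hS'
    exact hnotMem _ hS (mem_insert_self t S')

end PathSet

section ExpectedReachProb

variable {Ω : Type*} [MeasurableSpace Ω] (μ : Measure Ω) {P : ℕ → Ω → ℕ} {p : ℕ → ℕ → ℝ}
  {x k : ℕ}

noncomputable def expectedReachProb (μ : Measure Ω) (P : ℕ → Ω → ℕ) (p : ℕ → ℕ → ℝ)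
    (x k t : ℕ) : ℝ :=
  ∑ S ∈ (range t).powerset, (μ (pathSet P t S)).toReal * reachProb p x t (k - t) #S

lemma expectedReachProb_zero [IsProbabilityMeasure μ] :
    expectedReachProb μ P p x k 0 = reachProb p x 0 k 0 := by
  simp [expectedReachProb]

lemma expectedReachProb_self (hP : ∀ s, Measurable (P s)) (hP01 : ∀ t ω, P t ω = 0 ∨ P t ω = 1)
    [IsFiniteMeasure μ] :
    expectedReachProb μ P p x k k = (μ {ω | x ≤ ∑ t ∈ range k, P t ω}).toReal := by
  rw [measure_sum_ge_eq_sum_pathSet μ hP hP01, ENNReal.toReal_sum fun S _ => measure_ne_top μ _,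
    sum_filter, expectedReachProb, Nat.sub_self]
  refine sum_congr rfl fun S _ => ?_
  simp only [reachProb]
  split_ifs <;> simp

lemma expectedReachProb_succ [IsFiniteMeasure μ] (hP : ∀ s, Measurable (P s))
    (hP01 : ∀ t ω, P t ω = 0 ∨ P t ω = 1) {t : ℕ} (ht : t < k) :
    expectedReachProb μ P p x k (t + 1) = expectedReachProb μ P p x k t +
      ∑ S ∈ (range t).powerset,
        ((μ (pathSet P (t + 1) (insert t S))).toReal - (μ (pathSet P t S)).toReal * p t #S) *
          (reachProb p x (t + 1) (k - (t + 1)) (#S + 1) -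
            reachProb p x (t + 1) (k - (t + 1)) #S) := by
  rw [expectedReachProb, sum_powerset_succ μ hP hP01, expectedReachProb, ← sum_add_distrib,
    show k - t = k - (t + 1) + 1 by omega]
  refine sum_congr rfl fun S _ => ?_
  simp only [reachProb]
  ring

theorem toReal_measure_sum_ge_le_reachProb [IsProbabilityMeasure μ] (hP : ∀ s, Measurable (P s))
    (hP01 : ∀ t ω, P t ω = 0 ∨ P t ω = 1) (hp : ∀ t j, p t j ∈ Set.Icc 0 1)
    (hstep : ∀ t < k, ∀ S ⊆ range t,
      (μ (pathSet P (t + 1) (insert t S))).toReal ≤ (μ (pathSet P t S)).toReal * p t #S) :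
    (μ {ω | x ≤ ∑ t ∈ range k, P t ω}).toReal ≤ reachProb p x 0 k 0 := by
  suffices ∀ t ≤ k, expectedReachProb μ P p x k t ≤ reachProb p x 0 k 0 by
    simpa only [expectedReachProb_self μ hP hP01] using this k le_rfl
  intro t
  induction t with
  | zero => exact fun _ => (expectedReachProb_zero μ).le
  | succ t ih =>
    intro ht
    rw [expectedReachProb_succ μ hP hP01 ht]
    refine add_le_of_le_of_nonpos (ih (Nat.le_of_succ_le ht)) (sum_nonpos fun S hS => ?_)
    exact mul_nonpos_of_nonpos_of_nonneg (sub_nonpos.2 (hstep t ht S (mem_powerset.1 hS)))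
      (sub_nonneg.2 (reachProb_le_succ hp x _ _ _))

theorem toReal_measure_sum_ge_eq_reachProb [IsProbabilityMeasure μ] (hP : ∀ s, Measurable (P s))
    (hP01 : ∀ t ω, P t ω = 0 ∨ P t ω = 1)
    (hstep : ∀ t < k, ∀ S ⊆ range t,
      (μ (pathSet P (t + 1) (insert t S))).toReal = (μ (pathSet P t S)).toReal * p t #S) :
    (μ {ω | x ≤ ∑ t ∈ range k, P t ω}).toReal = reachProb p x 0 k 0 := by
  suffices ∀ t ≤ k, expectedReachProb μ P p x k t = reachProb p x 0 k 0 by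
    simpa only [expectedReachProb_self μ hP hP01] using this k le_rfl
  intro t
  induction t with
  | zero => exact fun _ => expectedReachProb_zero μ
  | succ t ih =>
    intro ht
    rw [expectedReachProb_succ μ hP hP01 ht, ih (Nat.le_of_succ_le ht), add_eq_left]
    exact sum_eq_zero fun S hS => by rw [hstep t ht S (mem_powerset.1 hS), sub_self, zero_mul]

end ExpectedReachProb

section ConditionalBound

variable {Ω : Type*} [MeasurableSpace Ω] (μ : Measure Ω) [IsFiniteMeasure μ] {P : ℕ → Ω → ℕ}
  {k t : ℕ} {S : Finset ℕ} {q : ℕ → ℝ → ℝ}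

lemma toReal_measure_pathSet_insert_le_mul
    (hcond : ∀ t < k, ∀ v : ℕ → ℕ, μ {ω | ∀ s < t, P s ω = v s} ≠ 0 →
      (μ {ω | P t ω = 1 ∧ ∀ s < t, P s ω = v s}).toReal /
          (μ {ω | ∀ s < t, P s ω = v s}).toReal ≤ q t (∑ s ∈ range t, (v s : ℝ)))
    (ht : t < k) (hS : S ⊆ range t) :
    (μ (pathSet P (t + 1) (insert t S))).toReal ≤
      (μ (pathSet P t S)).toReal * Set.projIcc 0 1 zero_le_one (q t #S) := by
  rw [pathSet_succ_insert hS, Set.inter_comm]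
  refine le_mul_projIcc_of_div_le ENNReal.toReal_nonneg
    (ENNReal.toReal_mono (measure_ne_top μ _) (measure_mono Set.inter_subset_right)) fun h => ?_
  rw [← sum_range_ite_mem_eq_card hS]
  exact hcond t ht _ fun h0 => h (by rw [pathSet, h0]; rfl)

lemma toReal_measure_pathSet_insert_eq_mul
    (hcond : ∀ t < k, ∀ v : ℕ → ℕ, μ {ω | ∀ s < t, P s ω = v s} ≠ 0 →
      (μ {ω | P t ω = 1 ∧ ∀ s < t, P s ω = v s}).toReal /
          (μ {ω | ∀ s < t, P s ω = v s}).toReal = q t (∑ s ∈ range t, (v s : ℝ)))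
    (ht : t < k) (hS : S ⊆ range t) :
    (μ (pathSet P (t + 1) (insert t S))).toReal =
      (μ (pathSet P t S)).toReal * Set.projIcc 0 1 zero_le_one (q t #S) := by
  rw [pathSet_succ_insert hS, Set.inter_comm]
  refine eq_mul_projIcc_of_div_eq ENNReal.toReal_nonneg
    (ENNReal.toReal_mono (measure_ne_top μ _) (measure_mono Set.inter_subset_right)) fun h => ?_
  rw [← sum_range_ite_mem_eq_card hS]
  exact hcond t ht _ fun h0 => h (by rw [pathSet, h0]; rfl)

end ConditionalBound

theorem stmt_2_general {Ω₁ Ω₂ : Type*} [MeasurableSpace Ω₁] [MeasurableSpace Ω₂]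
    (μ : Measure Ω₁) (ν : Measure Ω₂) [IsProbabilityMeasure μ] [IsProbabilityMeasure ν]
    (N m k : ℕ)
    (P : ℕ → Ω₁ → ℕ) (R : ℕ → Ω₂ → ℕ)
    (hPmeas : ∀ t, Measurable (P t)) (hRmeas : ∀ t, Measurable (R t))
    (hP01 : ∀ t ω, P t ω = 0 ∨ P t ω = 1) (hR01 : ∀ t ω, R t ω = 0 ∨ R t ω = 1)
    (hPcond : ∀ t < k, ∀ v : ℕ → ℕ, μ {ω | ∀ s < t, P s ω = v s} ≠ 0 →
      (μ {ω | P t ω = 1 ∧ ∀ s < t, P s ω = v s}).toReal /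
          (μ {ω | ∀ s < t, P s ω = v s}).toReal ≤
        ((m : ℝ) - ∑ s ∈ Finset.range t, (v s : ℝ)) / ((N : ℝ) - t))
    (hRcond : ∀ t < k, ∀ v : ℕ → ℕ, ν {ω | ∀ s < t, R s ω = v s} ≠ 0 →
      (ν {ω | R t ω = 1 ∧ ∀ s < t, R s ω = v s}).toReal /
          (ν {ω | ∀ s < t, R s ω = v s}).toReal =
        ((m : ℝ) - ∑ s ∈ Finset.range t, (v s : ℝ)) / ((N : ℝ) - t)) :
    ∀ x : ℕ, μ {ω | x ≤ ∑ t ∈ Finset.range k, P t ω} ≤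
      ν {ω | x ≤ ∑ t ∈ Finset.range k, R t ω} := by
  intro x
  let q : ℕ → ℝ → ℝ := fun t y => ((m : ℝ) - y) / ((N : ℝ) - t)
  let p : ℕ → ℕ → ℝ := fun t j => Set.projIcc 0 1 zero_le_one (q t j)
  rw [← ENNReal.toReal_le_toReal (measure_ne_top μ _) (measure_ne_top ν _),
    toReal_measure_sum_ge_eq_reachProb ν hRmeas hR01 (p := p)
      fun t ht S hS => toReal_measure_pathSet_insert_eq_mul ν (q := q) hRcond ht hS]
  exact toReal_measure_sum_ge_le_reachProb μ hPmeas hP01 (fun t j => (Set.projIcc _ _ _ _).2)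
    fun t ht S hS => toReal_measure_pathSet_insert_le_mul μ (q := q) hPcond ht hS

theorem stmt_2 {Ω₁ Ω₂ : Type*} [MeasurableSpace Ω₁] [MeasurableSpace Ω₂]
    (μ : Measure Ω₁) (ν : Measure Ω₂) [IsProbabilityMeasure μ] [IsProbabilityMeasure ν]
    (N m k : ℕ) (hk : 0 < k) (hkN : k ≤ N) (hmN : m ≤ N)
    (P : ℕ → Ω₁ → ℕ) (R : ℕ → Ω₂ → ℕ)
    (hPmeas : ∀ t, Measurable (P t)) (hRmeas : ∀ t, Measurable (R t))
    (hP01 : ∀ t ω, P t ω = 0 ∨ P t ω = 1) (hR01 : ∀ t ω, R t ω = 0 ∨ R t ω = 1)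
    (hPcond : ∀ t < k, ∀ v : ℕ → ℕ, μ {ω | ∀ s < t, P s ω = v s} ≠ 0 →
      (μ {ω | P t ω = 1 ∧ ∀ s < t, P s ω = v s}).toReal /
          (μ {ω | ∀ s < t, P s ω = v s}).toReal ≤
        ((m : ℝ) - ∑ s ∈ Finset.range t, (v s : ℝ)) / ((N : ℝ) - t))
    (hRcond : ∀ t < k, ∀ v : ℕ → ℕ, ν {ω | ∀ s < t, R s ω = v s} ≠ 0 →
      (ν {ω | R t ω = 1 ∧ ∀ s < t, R s ω = v s}).toReal /
          (ν {ω | ∀ s < t, R s ω = v s}).toReal =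
        ((m : ℝ) - ∑ s ∈ Finset.range t, (v s : ℝ)) / ((N : ℝ) - t)) :
    ∀ x : ℕ, μ {ω | x ≤ ∑ t ∈ Finset.range k, P t ω} ≤
      ν {ω | x ≤ ∑ t ∈ Finset.range k, R t ω} :=
  stmt_2_general μ ν N m k P R hPmeas hRmeas hP01 hR01 hPcond hRcond
end

section
/- Fix nonnegative integer vectors m = (m_1, ..., m_n) and a = (a_1, ..., a_n) with ‖a‖ < ‖m‖ (where ‖v‖ denotes the sum of the entries). Let f_i(m, a) be the fraction of all (m,a)-permutations whose last term is i. Then for every i with at least one (m,a)-permutation existing, f_i(m, a) ≤ m_i / (‖m‖ - a_i). -/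
/-!
Double counting. Let `p` be the last position, which lies beyond every forbidden block. If `w` is
an `(m, a)`-permutation with `w p = i` and `q` is one of the `‖m‖ - a i` positions where `i` is
allowed, swapping the letters at `p` and `q` gives an `(m, a)`-permutation `w'` with `w' q = i`.
The map `(w, q) ↦ (w', q)` is injective, and there are exactly `m i` choices of `q` with `w' q = i`
for each `w'`, so `#{w | w p = i} * (‖m‖ - a i) ≤ m i * #{w}`.
-/

/-- An `(m, a)`-permutation: a word of length `‖m‖ = ∑ i, m i` over the alphabet `Fin n`
in which letter `i` appears exactly `m i` times, and where the block of `a i` consecutive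
positions starting at `∑_{j < i} a j` is forbidden from taking the value `i`. -/
def IsMAPerm (n : ℕ) (m a : Fin n → ℕ) (w : Fin (∑ i, m i) → Fin n) : Prop :=
  (∀ i : Fin n, (Finset.univ.filter (fun p => w p = i)).card = m i) ∧
  ∀ i : Fin n, ∀ p : Fin (∑ i, m i),
    (∑ j ∈ Finset.univ.filter (fun j => j < i), a j) ≤ (p : ℕ) →
    (p : ℕ) < (∑ j ∈ Finset.univ.filter (fun j => j < i), a j) + a i →
    w p ≠ i

open Finset

lemma card_filter_outside_block {N s k : ℕ} (h : s + k ≤ N) :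
    #(univ.filter fun q : Fin N => ¬(s ≤ (q : ℕ) ∧ (q : ℕ) < s + k)) = N - k := by
  have hblock : (univ.filter fun q : Fin N => s ≤ (q : ℕ) ∧ (q : ℕ) < s + k) =
      (Ico s (s + k)).attachFin (fun x hx => by rw [mem_Ico] at hx; omega) := by
    ext q; simp
  rw [filter_not, card_sdiff_of_subset (filter_subset _ _), hblock, card_attachFin, Nat.card_Ico,
    card_univ, Fintype.card_fin, Nat.add_sub_cancel_left]

lemma card_filter_comp_perm {N : ℕ} {α : Type*} [DecidableEq α] (w : Fin N → α)
    (e : Equiv.Perm (Fin N)) (x : α) :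
    #(univ.filter fun p => w (e p) = x) = #(univ.filter fun p => w p = x) :=
  card_equiv e (by simp)

lemma card_filter_product_apply_eq {N : ℕ} {α : Type*} [DecidableEq α] (A : Finset (Fin N → α))
    (x : α) {c : ℕ} (hA : ∀ w ∈ A, #(univ.filter fun p => w p = x) = c) :
    #((A ×ˢ univ).filter fun wp : (Fin N → α) × Fin N => wp.1 wp.2 = x) = c * #A := by
  rw [card_filter, sum_product, mul_comm, ← smul_eq_mul, ← sum_const]
  refine sum_congr rfl fun w hw => ?_
  rw [← hA w hw, card_filter]

section
variable {n : ℕ} {m a : Fin n → ℕ}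

def blockStart (a : Fin n → ℕ) (i : Fin n) : ℕ := ∑ j ∈ univ.filter (· < i), a j

lemma blockStart_add_le_sum (a : Fin n → ℕ) (i : Fin n) : blockStart a i + a i ≤ ∑ j, a j := by
  rw [blockStart, add_comm, ← sum_insert (by simp)]
  exact sum_le_sum_of_subset (subset_univ _)

lemma IsMAPerm.comp_swap {w : Fin (∑ i, m i) → Fin n} (hw : IsMAPerm n m a w)
    {p q : Fin (∑ i, m i)} {i : Fin n} (hp : ∑ j, a j ≤ p) (hwp : w p = i)
    (hq : ¬(blockStart a i ≤ q ∧ (q : ℕ) < blockStart a i + a i)) :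
    IsMAPerm n m a (w ∘ Equiv.swap p q) := by
  refine ⟨fun j => (card_filter_comp_perm w _ j).trans (hw.1 j), fun j r hr₁ hr₂ => ?_⟩
  have hrp : r ≠ p := by
    rintro rfl
    have := blockStart_add_le_sum a j
    exact absurd hr₂ (by unfold blockStart at this; omega)
  by_cases hrq : r = q
  · subst hrq
    rintro (hj : w (Equiv.swap p r r) = j)
    rw [Equiv.swap_apply_right, hwp] at hj
    exact hq (hj ▸ ⟨hr₁, hr₂⟩)
  · rw [Function.comp_apply, Equiv.swap_apply_of_ne_of_ne hrp hrq]
    exact hw.2 j r hr₁ hr₂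

lemma card_isMAPerm_apply_eq_mul_le {p : Fin (∑ i, m i)} (hp : ∑ j, a j ≤ p) (i : Fin n) :
    Nat.card {w // IsMAPerm n m a w ∧ w p = i} * (∑ j, m j - a i) ≤
      m i * Nat.card {w // IsMAPerm n m a w} := by
  classical
  simp only [Nat.card_eq_fintype_card, Fintype.card_subtype]
  set A := univ.filter (IsMAPerm n m a)
  set allowed := univ.filter fun q : Fin (∑ j, m j) =>
    ¬(blockStart a i ≤ (q : ℕ) ∧ (q : ℕ) < blockStart a i + a i)
  have hallowed : #allowed = ∑ j, m j - a i :=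
    card_filter_outside_block (by have := blockStart_add_le_sum a i; omega)
  have hpairs := card_filter_product_apply_eq A i (c := m i) fun w hw => (mem_filter.1 hw).2.1 i
  rw [← hallowed, ← card_product, ← hpairs]
  refine card_le_card_of_injOn (fun wq => (wq.1 ∘ Equiv.swap p wq.2, wq.2)) ?_ ?_
  · rintro ⟨w, q⟩ hwq
    simp only [coe_product, coe_filter, Set.mem_prod, Set.mem_ofPred_eq, mem_univ, true_and,
      allowed] at hwq
    simp only [coe_filter, mem_product, mem_filter, mem_univ, true_and, and_true,
      Set.mem_ofPred_eq, A, Function.comp_apply, Equiv.swap_apply_right]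
    exact ⟨hwq.1.1.comp_swap hp hwq.1.2 hwq.2, hwq.1.2⟩
  · rintro ⟨w, q⟩ - ⟨w', q'⟩ - h
    obtain ⟨hw, rfl : q = q'⟩ := Prod.ext_iff.1 h
    simpa using (Equiv.swap p q).surjective.injective_comp_right hw

end

theorem stmt_3 (n : ℕ) (m a : Fin n → ℕ) (hA : ∑ i, a i < ∑ i, m i)
    (i : Fin n) :
    (Nat.card {w : Fin (∑ i, m i) → Fin n //
        IsMAPerm n m a w ∧ w ⟨(∑ i, m i) - 1, by omega⟩ = i} : ℝ) /
      (Nat.card {w : Fin (∑ i, m i) → Fin n // IsMAPerm n m a w} : ℝ) ≤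
      (m i : ℝ) / ((∑ i, m i : ℕ) - (a i : ℝ)) := by
  have hai : a i < ∑ j, m j := (single_le_sum (fun _ _ => Nat.zero_le _) (mem_univ i)).trans_lt hA
  have hcount := card_isMAPerm_apply_eq_mul_le (m := m) (p := ⟨(∑ j, m j) - 1, by omega⟩)
    (show ∑ j, a j ≤ (∑ j, m j) - 1 by omega) i
  rw [← Nat.cast_sub hai.le, le_div_iff₀ (by exact_mod_cast Nat.sub_pos_of_lt hai),
    div_mul_eq_mul_div]
  exact div_le_of_le_mul₀ (Nat.cast_nonneg _) (Nat.cast_nonneg _) (by exact_mod_cast hcount)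
end

section
/- Let N, m, b be positive integers with N ≥ m² + m and b ≤ N, and let S ~ Hyp(N, m, b) be a hypergeometric random variable. Then for every integer k with 0 ≤ k ≤ m, Pr[S = k] ≤ 3 · C(m,k) q^k (1-q)^{m-k}, where q = b/N. -/
/-!
Counting ordered samples, `Pr[S = k] = C(m,k) b^(k) (N-b)^(m-k) / N^(m)` with falling factorials
`x^(j) = x (x-1) ⋯ (x-j+1)`. The numerator is at most `b^k (N-b)^(m-k)`, and
`N^m ≤ ((1 + 1/m) (N + 1 - m))^m ≤ e · N^(m)` as soon as `m² ≤ N + 1`.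
-/

open Nat

lemma one_add_inv_pow_le_three (m : ℕ) : (1 + (m : ℝ)⁻¹) ^ m ≤ 3 :=
  Real.one_add_inv_pow_le_exp.trans (Real.exp_one_lt_d9.le.trans (by norm_num))

lemma le_one_add_inv_mul_add_one_sub {m n : ℕ} (hm : 0 < m) (h : m ^ 2 ≤ n + 1) :
    (n : ℝ) ≤ (1 + (m : ℝ)⁻¹) * ((n + 1 - m : ℕ) : ℝ) := by
  have hmn : m ≤ n + 1 := (Nat.le_self_pow two_ne_zero m).trans h
  have hm' : (0 : ℝ) < m := by exact_mod_cast hm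
  have h' : (m : ℝ) ^ 2 ≤ n + 1 := by exact_mod_cast h
  rw [Nat.cast_sub hmn, ← sub_nonneg]
  have key : (1 + (m : ℝ)⁻¹) * (((n + 1 : ℕ) : ℝ) - m) - n = (n + 1 - m ^ 2) / m := by
    push_cast
    field_simp
    ring
  rw [key]
  exact div_nonneg (by linarith) hm'.le

lemma pow_le_three_mul_descFactorial {m n : ℕ} (h : m ^ 2 ≤ n + 1) :
    (n : ℝ) ^ m ≤ 3 * n.descFactorial m := by
  rcases m.eq_zero_or_pos with rfl | hm
  · norm_num
  calc (n : ℝ) ^ m ≤ ((1 + (m : ℝ)⁻¹) * ((n + 1 - m : ℕ) : ℝ)) ^ m :=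
        pow_le_pow_left₀ n.cast_nonneg (le_one_add_inv_mul_add_one_sub hm h) m
    _ = (1 + (m : ℝ)⁻¹) ^ m * ((n + 1 - m : ℕ) : ℝ) ^ m := mul_pow _ _ _
    _ ≤ 3 * n.descFactorial m := by
        gcongr
        · exact one_add_inv_pow_le_three m
        · exact_mod_cast Nat.pow_sub_le_descFactorial n m

lemma choose_mul_choose_mul_descFactorial {a c n k m : ℕ} (hk : k ≤ m) :
    a.choose k * c.choose (m - k) * n.descFactorial m =
      m.choose k * a.descFactorial k * c.descFactorial (m - k) * n.choose m := by
  rw [descFactorial_eq_factorial_mul_choose n m, descFactorial_eq_factorial_mul_choose a k,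
    descFactorial_eq_factorial_mul_choose c (m - k), ← choose_mul_factorial_mul_factorial hk]
  ring

lemma choose_mul_choose_div_choose_eq {a c n k m : ℕ} (hk : k ≤ m) (hmn : m ≤ n) :
    (a.choose k * c.choose (m - k) : ℝ) / n.choose m =
      m.choose k * a.descFactorial k * c.descFactorial (m - k) / n.descFactorial m := by
  have hchoose : (0 : ℝ) < n.choose m := by exact_mod_cast choose_pos hmn
  have hdesc : (0 : ℝ) < n.descFactorial m := by exact_mod_cast descFactorial_pos.2 hmn
  rw [div_eq_div_iff hchoose.ne' hdesc.ne']
  exact_mod_cast choose_mul_choose_mul_descFactorial hk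

lemma choose_mul_choose_div_choose_le {a c n k m : ℕ} (hk : k ≤ m) (hmn : m ≤ n)
    (h : m ^ 2 ≤ n + 1) :
    (a.choose k * c.choose (m - k) : ℝ) / n.choose m ≤
      3 * m.choose k * ((a : ℝ) / n) ^ k * ((c : ℝ) / n) ^ (m - k) := by
  have hdesc : 0 < n.descFactorial m := descFactorial_pos.2 hmn
  have hpow : (0 : ℝ) < (n : ℝ) ^ m := by
    exact_mod_cast hdesc.trans_le (descFactorial_le_pow n m)
  rw [choose_mul_choose_div_choose_eq hk hmn]
  calc (m.choose k * a.descFactorial k * c.descFactorial (m - k) : ℝ) / n.descFactorial m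
      ≤ (m.choose k * (a : ℝ) ^ k * (c : ℝ) ^ (m - k)) / ((n : ℝ) ^ m / 3) := by
        gcongr
        · exact_mod_cast descFactorial_le_pow a k
        · exact_mod_cast descFactorial_le_pow c (m - k)
        · linarith [pow_le_three_mul_descFactorial h]
    _ = 3 * m.choose k * ((a : ℝ) / n) ^ k * ((c : ℝ) / n) ^ (m - k) := by
        have hsplit : (n : ℝ) ^ m = (n : ℝ) ^ k * (n : ℝ) ^ (m - k) := by
          rw [← pow_add, Nat.add_sub_cancel' hk]
        rw [hsplit] at hpow
        have hk0 := left_ne_zero_of_mul hpow.ne'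
        have hmk0 := right_ne_zero_of_mul hpow.ne'
        rw [div_pow, div_pow, hsplit]
        field_simp

theorem stmt_6_general (N m b : ℕ) (hb : 0 < b) (hN : m ^ 2 + m ≤ N) (hbN : b ≤ N)
    (k : ℕ) (hk : k ≤ m) :
    ((b.choose k : ℝ) * ((N - b).choose (m - k) : ℝ)) / (N.choose m : ℝ) ≤
      3 * (m.choose k : ℝ) * ((b : ℝ) / N) ^ k * (1 - (b : ℝ) / N) ^ (m - k) := by
  have hN0 : (N : ℝ) ≠ 0 := by exact_mod_cast (hb.trans_le hbN).ne'
  have hq : 1 - (b : ℝ) / N = ((N - b : ℕ) : ℝ) / N := by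
    rw [Nat.cast_sub hbN]
    field_simp
  rw [hq]
  exact choose_mul_choose_div_choose_le hk (by nlinarith) (by nlinarith)

theorem stmt_6 (N m b : ℕ) (hm : 0 < m) (hb : 0 < b) (hN : m ^ 2 + m ≤ N) (hbN : b ≤ N)
    (k : ℕ) (hk : k ≤ m) :
    ((b.choose k : ℝ) * ((N - b).choose (m - k) : ℝ)) / (N.choose m : ℝ) ≤
      3 * (m.choose k : ℝ) * ((b : ℝ) / N) ^ k * (1 - (b : ℝ) / N) ^ (m - k) :=
  stmt_6_general N m b hb hN hbN k hk
end

section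
/- Let m ≥ 1, q ∈ [0,1], and N ≥ m² + m an integer with b = qN an integer, 0 ≤ b ≤ N. Then for all 0 ≤ k ≤ m, C(qN, k) · C((1-q)N, m-k) / C(N, m) ≤ C(m,k) q^k (1-q)^{m-k} · e^{m²/(N-m)}. -/
/-!
Writing binomial coefficients through falling factorials, `C(b,k) C(N-b,m-k) / C(N,m)` equals
`C(m,k) b^{(k)} (N-b)^{(m-k)} / N^{(m)}`. The numerator falling factorials are at most the
corresponding powers and `N^{(m)} ≥ (N-m)^m`, so the hypergeometric mass is at most the binomial
mass times `(N/(N-m))^m = (1 + m/(N-m))^m ≤ exp(m²/(N-m))`.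
-/

open Real

namespace Nat

theorem pow_sub_le_descFactorial' (n k : ℕ) : (n - k) ^ k ≤ n.descFactorial k :=
  (Nat.pow_le_pow_left (by omega) k).trans (n.pow_sub_le_descFactorial k)

theorem descFactorial_mul_descFactorial_mul_pow_le (N b m k : ℕ) :
    b.descFactorial k * (N - b).descFactorial (m - k) * (N - m) ^ m ≤
      b ^ k * (N - b) ^ (m - k) * N.descFactorial m :=
  Nat.mul_le_mul (Nat.mul_le_mul (b.descFactorial_le_pow k) ((N - b).descFactorial_le_pow _))
    (N.pow_sub_le_descFactorial' m)

theorem choose_mul_choose_mul_pow_le (N b m k : ℕ) (hk : k ≤ m) :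
    b.choose k * (N - b).choose (m - k) * (N - m) ^ m ≤
      m.choose k * b ^ k * (N - b) ^ (m - k) * N.choose m := by
  have hfac : m ! = m.choose k * (k ! * (m - k)!) := by
    rw [← Nat.choose_mul_factorial_mul_factorial hk]; ring
  refine Nat.le_of_mul_le_mul_left ?_ (Nat.mul_pos k.factorial_pos (m - k).factorial_pos)
  calc k ! * (m - k)! * (b.choose k * (N - b).choose (m - k) * (N - m) ^ m)
      = b.descFactorial k * (N - b).descFactorial (m - k) * (N - m) ^ m := by
        rw [descFactorial_eq_factorial_mul_choose, descFactorial_eq_factorial_mul_choose]; ring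
    _ ≤ b ^ k * (N - b) ^ (m - k) * N.descFactorial m :=
        descFactorial_mul_descFactorial_mul_pow_le N b m k
    _ = k ! * (m - k)! * (m.choose k * b ^ k * (N - b) ^ (m - k) * N.choose m) := by
        rw [descFactorial_eq_factorial_mul_choose, hfac]; ring

end Nat

theorem div_sub_pow_le_exp (n : ℕ) {N : ℝ} (hn : n < N) :
    (N / (N - n)) ^ n ≤ exp ((n : ℝ) ^ 2 / (N - n)) := by
  have hpos : 0 < N - n := by linarith
  calc (N / (N - n)) ^ n = (n / (N - n) + 1) ^ n := by field_simp; ring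
    _ ≤ exp (n / (N - n)) ^ n := pow_le_pow_left₀ (by positivity) (add_one_le_exp _) n
    _ = exp ((n : ℝ) ^ 2 / (N - n)) := by rw [← exp_nat_mul]; ring_nf

theorem choose_mul_choose_div_choose_le_s8 (N m b k : ℕ) (hmN : m < N) (hbN : b ≤ N)
    (hk : k ≤ m) :
    ((b.choose k : ℝ) * ((N - b).choose (m - k) : ℝ)) / (N.choose m : ℝ) ≤
      (m.choose k : ℝ) * (b / N : ℝ) ^ k * (1 - b / N : ℝ) ^ (m - k) *
        ((N : ℝ) / (N - m)) ^ m := by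
  have hN : (0 : ℝ) < N := by exact_mod_cast (m.zero_le.trans_lt hmN)
  have hNm : (0 : ℝ) < N - m := sub_pos.mpr (by exact_mod_cast hmN)
  have hchoose : (0 : ℝ) < N.choose m := by exact_mod_cast Nat.choose_pos hmN.le
  have hcast : (((b.choose k * (N - b).choose (m - k) * (N - m) ^ m : ℕ) : ℝ) ≤
      ((m.choose k * b ^ k * (N - b) ^ (m - k) * N.choose m : ℕ) : ℝ)) := by
    exact_mod_cast Nat.choose_mul_choose_mul_pow_le N b m k hk
  push_cast [Nat.cast_sub hbN, Nat.cast_sub hmN.le] at hcast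
  have hsplit : (N : ℝ) ^ m = (N : ℝ) ^ k * (N : ℝ) ^ (m - k) := by
    rw [← pow_add, Nat.add_sub_cancel' hk]
  rw [one_sub_div hN.ne', div_pow, div_pow, div_pow, div_le_iff₀ hchoose, hsplit]
  field_simp
  linarith

theorem stmt_8 (N m b : ℕ) (hm : 1 ≤ m) (hN : m ^ 2 + m ≤ N) (hbN : b ≤ N)
    (q : ℝ) (hq : q = (b : ℝ) / N) (k : ℕ) (hk : k ≤ m) :
    ((b.choose k : ℝ) * ((N - b).choose (m - k) : ℝ)) / (N.choose m : ℝ) ≤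
      (m.choose k : ℝ) * q ^ k * (1 - q) ^ (m - k) *
        Real.exp ((m : ℝ) ^ 2 / ((N : ℝ) - m)) := by
  have hmN : m < N := by nlinarith
  have hq1 : 0 ≤ 1 - q := by
    rw [hq, sub_nonneg]
    exact div_le_one_of_le₀ (by exact_mod_cast hbN) (Nat.cast_nonneg N)
  subst hq
  calc _ ≤ (m.choose k : ℝ) * (b / N : ℝ) ^ k * (1 - b / N : ℝ) ^ (m - k) *
          ((N : ℝ) / (N - m)) ^ m := choose_mul_choose_div_choose_le_s8 N m b k hmN hbN hk
    _ ≤ _ := by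
      gcongr
      exact div_sub_pow_le_exp m (by exact_mod_cast hmN)
end

section
/- For a uniformly random π from S_{m,n} with m ≥ 2 fixed and n → ∞, let T_m be the smallest index t such that π_t is the m-th occurrence of some card type. Then Σ_{t ≥ 1} Pr[T_m ≥ t] = Θ(n^{1 - 1/m}); that is, there are constants c_1, c_2 > 0 depending only on m such that for all sufficiently large n, c_1 n^{1-1/m} ≤ E[T_m] ≤ c_2 n^{1-1/m}. -/
/-- The finset of words of length `m * n` over `Fin n` where each letter appears
exactly `m` times (the deck `S_{m,n}`). -/
def wordFinset (m n : ℕ) : Finset (Fin (m * n) → Fin n) :=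
  Finset.univ.filter
    (fun w => ∀ i : Fin n, (Finset.univ.filter (fun p => w p = i)).card = m)

/-- `Tstat m n w` is the smallest index `t` (1-indexed) such that among the first `t`
letters of `w` some letter appears `m` times. -/
noncomputable def Tstat (m n : ℕ) (w : Fin (m * n) → Fin n) : ℕ :=
  sInf {t : ℕ | ∃ i : Fin n,
    m ≤ (Finset.univ.filter (fun p : Fin (m * n) => (p : ℕ) < t ∧ w p = i)).card}

/-!
Write `X_s(w) = #(completedLetters w (firstPositions (m * n) s))` for the number of letters
all of whose `m` copies lie among the first `s` positions of `w`, so that `T_m(w) ≤ s` iff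
`X_s(w) > 0`. Permutations of the positions act transitively on the possible position sets of
one letter, and of two letters, so `E X_s = n C(s,m) / C(mn,m) ≍ s^m / n^(m-1)`; and since
`C(s-m,m) / C(s,m) ≤ C(mn-m,m) / C(mn,m)`, the events that a given letter is completed are
negatively correlated, whence `E X_s² ≤ E X_s + (E X_s)²`. The first moment gives
`P(T_m ≤ s) ≤ E X_s ≤ 1/2` for `s ≤ n^(1-1/m) / 2`, and the second moment method gives
`P(T_m > s) ≤ 1 / E X_s = O((n^(1-1/m) / s)^m)`. Summing `P(T_m > s)` over `s` yields
`E T_m ≍ n^(1-1/m)`.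
-/

open Finset

lemma Equiv.Perm.exists_map_finset_eq_of_disjoint {β : Type*} [DecidableEq β]
    {A B A' B' : Finset β} (hA : #A = #A') (hB : #B = #B')
    (hAB : _root_.Disjoint A B) (hAB' : _root_.Disjoint A' B') :
    ∃ σ : Perm β, A.map σ.toEmbedding = A' ∧ B.map σ.toEmbedding = B' := by
  let eA := A.equivOfCardEq hA
  let eB := B.equivOfCardEq hB
  obtain ⟨σ, hσ⟩ := Perm.exists_extending_pair
    (Sum.elim (fun a : A => (a : β)) (fun b : B => (b : β)))
    (Sum.elim (fun a : A => (eA a : β)) (fun b : B => (eB b : β)))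
    (Subtype.val_injective.sumElim Subtype.val_injective
      fun a b h => disjoint_left.mp hAB a.2 (h ▸ b.2))
    ((Subtype.val_injective.comp eA.injective).sumElim (Subtype.val_injective.comp eB.injective)
      fun a b h => disjoint_left.mp hAB' (eA a).2 ((show (eA a : β) = eB b from h) ▸ (eB b).2))
  have map_eq {X Y : Finset β} (hXY : #X = #Y) (e : X ≃ Y) (he : ∀ x : X, σ x = e x) :
      X.map σ.toEmbedding = Y := by
    refine eq_of_subset_of_card_le (fun y hy => ?_) (by simp [hXY])
    obtain ⟨x, hx, rfl⟩ := mem_map.mp hy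
    exact he ⟨x, hx⟩ ▸ (e ⟨x, hx⟩).2
  exact ⟨σ, map_eq hA eA fun a => hσ (.inl a), map_eq hB eB fun b => hσ (.inr b)⟩

lemma Finset.sum_eq_sum_range_card_filter_lt {α : Type*} {s : Finset α} {f : α → ℕ} {M : ℕ}
    (hf : ∀ x ∈ s, f x ≤ M) : ∑ x ∈ s, f x = ∑ k ∈ range M, #{x ∈ s | k < f x} := by
  simp only [card_filter]
  rw [sum_comm]
  refine sum_congr rfl fun x hx => ?_
  have hfx := hf x hx
  have : {k ∈ range M | k < f x} = range (f x) := by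
    ext k
    simp only [mem_filter, mem_range]
    omega
  rw [← card_filter, this, card_range]

/-- The second moment method: if `E X² ≤ E X + (E X)²`, then `P(X = 0) ≤ 1 / E X`. -/
lemma Finset.card_filter_eq_zero_mul_sum_le {α : Type*} {s : Finset α} {f : α → ℝ}
    (hf : ∀ x ∈ s, 0 ≤ f x)
    (h : (∑ x ∈ s, f x ^ 2) * #s ≤ (∑ x ∈ s, f x) * #s + (∑ x ∈ s, f x) ^ 2) :
    (#{x ∈ s | f x = 0} : ℝ) * ∑ x ∈ s, f x ≤ (#s : ℝ) ^ 2 := by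
  set a := ∑ x ∈ s, f x
  set b := ∑ x ∈ s, f x ^ 2
  set N := (#s : ℝ)
  set G := (#{x ∈ s | f x = 0} : ℝ)
  set U := (#{x ∈ s | f x ≠ 0} : ℝ)
  have hGU : G + U = N := by
    simp only [G, U, N]; exact_mod_cast card_filter_add_card_filter_not _
  have ha : 0 ≤ a := sum_nonneg hf
  have hb : 0 ≤ b := sum_nonneg fun x _ => sq_nonneg (f x)
  have hU : 0 ≤ U := Nat.cast_nonneg _
  have hG : 0 ≤ G := Nat.cast_nonneg _
  have hCS : a ^ 2 ≤ U * b := by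
    simp only [a, b, U]
    rw [← sum_filter_ne_zero]
    refine (sq_sum_le_card_mul_sum_sq ..).trans (mul_le_mul_of_nonneg_left ?_ hU)
    exact sum_le_sum_of_subset_of_nonneg (filter_subset _ _) fun x _ _ => sq_nonneg (f x)
  rcases hb.eq_or_lt with hb0 | hb0
  · have : a = 0 := by nlinarith
    simp [this, sq_nonneg]
  · refine le_of_mul_le_mul_right ?_ hb0
    have hN : 0 ≤ N := by linarith
    calc G * a * b = a * (b * N) - a * (U * b) := by rw [← hGU]; ring
      _ ≤ a * (a * N + a ^ 2) - a * a ^ 2 := by gcongr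
      _ = a ^ 2 * N := by ring
      _ ≤ U * b * N := by gcongr
      _ ≤ N * b * N := by gcongr; linarith
      _ = N ^ 2 * b := by ring

lemma Nat.pow_sub_mul_choose_le (a b k : ℕ) :
    (a + 1 - k) ^ k * b.choose k ≤ b ^ k * a.choose k := by
  refine Nat.le_of_mul_le_mul_left ?_ k.factorial_pos
  calc k.factorial * ((a + 1 - k) ^ k * b.choose k)
      = (a + 1 - k) ^ k * b.descFactorial k := by
        rw [descFactorial_eq_factorial_mul_choose]; ring
    _ ≤ a.descFactorial k * b ^ k :=
        Nat.mul_le_mul (pow_sub_le_descFactorial a k) (descFactorial_le_pow b k)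
    _ = k.factorial * (b ^ k * a.choose k) := by
        rw [descFactorial_eq_factorial_mul_choose]; ring

lemma Nat.descFactorial_sub_mul_descFactorial_le {c M : ℕ} (h : c ≤ M) (k j : ℕ) :
    (c - k).descFactorial j * M.descFactorial j
      ≤ c.descFactorial j * (M - k).descFactorial j := by
  simp only [descFactorial_eq_prod_range, ← prod_mul_distrib]
  refine prod_le_prod' fun i _ => ?_
  rcases le_or_gt c (k + i) with hc | hc
  · simp [show c - k - i = 0 by omega]
  · obtain ⟨a, rfl⟩ : ∃ a, c = a + k + i := ⟨c - k - i, by omega⟩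
    obtain ⟨b, rfl⟩ : ∃ b, M = b + k + i := ⟨M - k - i, by omega⟩
    simp only [show a + k + i - k - i = a by omega, show b + k + i - i = b + k by omega,
      show a + k + i - i = a + k by omega, show b + k + i - k - i = b by omega]
    nlinarith

lemma Nat.choose_sub_mul_choose_le {c M : ℕ} (h : c ≤ M) (k : ℕ) :
    (c - k).choose k * M.choose k ≤ c.choose k * (M - k).choose k := by
  have := descFactorial_sub_mul_descFactorial_le h k k
  simp only [descFactorial_eq_factorial_mul_choose] at this
  refine Nat.le_of_mul_le_mul_left ?_ (pow_pos k.factorial_pos 2)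
  linarith

lemma Finset.card_filter_disjoint_powersetCard {α : Type*} [DecidableEq α] (D : Finset α)
    (k : ℕ) :
    #{q ∈ powersetCard k D ×ˢ powersetCard k D | Disjoint q.1 q.2}
      = (#D).choose k * (#D - k).choose k := by
  rw [card_filter, sum_product, ← card_powersetCard k D]
  refine sum_const_nat fun A hA => ?_
  rw [mem_powersetCard] at hA
  rw [← card_filter, ← hA.2, ← card_sdiff_of_subset hA.1, ← card_powersetCard]
  congr 1
  ext B
  simp only [mem_filter, mem_powersetCard, subset_sdiff]
  tauto

lemma sum_Ioo_inv_pow_le {m : ℕ} (hm : 2 ≤ m) (k M : ℕ) :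
    ∑ s ∈ Ioo k M, ((s : ℝ) ^ m)⁻¹ ≤ 2 / ((k : ℝ) + 1) ^ (m - 1) := by
  obtain ⟨j, rfl⟩ := Nat.exists_eq_add_of_le' hm
  calc ∑ s ∈ Ioo k M, ((s : ℝ) ^ (j + 2))⁻¹
      ≤ ∑ s ∈ Ioo k M, (((k : ℝ) + 1) ^ j)⁻¹ * ((s : ℝ) ^ 2)⁻¹ := by
        refine sum_le_sum fun s hs => ?_
        have hs : (k : ℝ) + 1 ≤ s := by exact_mod_cast (mem_Ioo.mp hs).1
        have hs0 : (0 : ℝ) < s := by linarith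
        rw [← mul_inv, pow_add]
        exact inv_anti₀ (mul_pos (pow_pos (by positivity) j) (pow_pos hs0 2)) (by gcongr)
    _ = (((k : ℝ) + 1) ^ j)⁻¹ * ∑ s ∈ Ioo k M, ((s : ℝ) ^ 2)⁻¹ := by rw [mul_sum]
    _ ≤ (((k : ℝ) + 1) ^ j)⁻¹ * (2 / (k + 1)) := by
        gcongr; exact sum_Ioo_inv_sq_le k M
    _ = 2 / ((k : ℝ) + 1) ^ (j + 2 - 1) := by
        rw [show j + 2 - 1 = j + 1 by omega, pow_succ]; field_simp

lemma sum_range_le_of_le_div_pow {g : ℕ → ℝ} {m k M : ℕ} {A B : ℝ} (hm : 2 ≤ m)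
    (hA : 0 ≤ A) (hB : 0 ≤ B) (hgB : ∀ s < M, g s ≤ B)
    (hgA : ∀ s < M, k < s → g s ≤ A / s ^ m) :
    ∑ s ∈ range M, g s ≤ (k + 1) * B + 2 * A / ((k : ℝ) + 1) ^ (m - 1) := by
  rw [← sum_filter_add_sum_filter_not (range M) (· ≤ k)]
  have hhead : {s ∈ range M | s ≤ k} ⊆ range (k + 1) := fun s hs => by
    simp only [mem_filter, mem_range] at hs ⊢; omega
  have htail : {s ∈ range M | ¬s ≤ k} = Ioo k M := by
    ext s; simp only [mem_filter, mem_range, mem_Ioo]; omega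
  gcongr ?_ + ?_
  · calc ∑ s ∈ range M with s ≤ k, g s
        ≤ #{s ∈ range M | s ≤ k} • B :=
          sum_le_card_nsmul _ _ _ fun s hs => hgB s (mem_range.mp (mem_filter.mp hs).1)
      _ ≤ (k + 1) * B := by
          rw [nsmul_eq_mul]
          gcongr
          exact_mod_cast (card_le_card hhead).trans (card_range _).le
  · rw [htail]
    calc ∑ s ∈ Ioo k M, g s ≤ ∑ s ∈ Ioo k M, A * ((s : ℝ) ^ m)⁻¹ :=
          sum_le_sum fun s hs =>
            (hgA s (mem_Ioo.mp hs).2 (mem_Ioo.mp hs).1).trans_eq (div_eq_mul_inv _ _)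
      _ ≤ A * (2 / ((k : ℝ) + 1) ^ (m - 1)) := by
          rw [← mul_sum]; exact mul_le_mul_of_nonneg_left (sum_Ioo_inv_pow_le hm k M) hA
      _ = 2 * A / ((k : ℝ) + 1) ^ (m - 1) := by ring

section Positions

variable {α β : Type*} [Fintype α] [DecidableEq β]

def positions (w : α → β) (b : β) : Finset α := {a | w a = b}

lemma positions_comp_perm (w : α → β) (σ : Equiv.Perm α) (b : β) :
    positions (w ∘ σ) b = (positions w b).map σ.symm.toEmbedding := by
  ext a
  simp [positions]

lemma disjoint_positions (w : α → β) {b b' : β} (h : b ≠ b') :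
    Disjoint (positions w b) (positions w b') :=
  disjoint_left.mpr fun a ha ha' => by
    simp only [positions, mem_filter] at ha ha'
    exact h (ha.2 ▸ ha'.2)

variable [DecidableEq α] [Fintype β]

def completedLetters (w : α → β) (C : Finset α) : Finset β :=
  {b | positions w b ⊆ C}

lemma sum_card_completedLetters (s : Finset (α → β)) (C : Finset α) :
    ∑ w ∈ s, #(completedLetters w C) = ∑ b, #{w ∈ s | positions w b ⊆ C} := by
  simp only [completedLetters, card_filter]
  exact sum_comm

lemma sum_card_completedLetters_sq (s : Finset (α → β)) (C : Finset α) :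
    ∑ w ∈ s, #(completedLetters w C) ^ 2
      = ∑ b, ∑ b', #{w ∈ s | positions w b ⊆ C ∧ positions w b' ⊆ C} := by
  simp only [completedLetters, card_filter, sq, sum_mul_sum, ite_zero_mul_ite_zero, mul_one]
  rw [sum_comm]
  exact sum_congr rfl fun b _ => sum_comm

end Positions

section Words

variable {m n : ℕ}

lemma mem_wordFinset {w : Fin (m * n) → Fin n} :
    w ∈ wordFinset m n ↔ ∀ i, #(positions w i) = m := by
  simp [wordFinset, positions]

lemma wordFinset_nonempty : (wordFinset m n).Nonempty := by
  refine ⟨fun p => (finProdFinEquiv.symm p).2, mem_wordFinset.mpr fun i => ?_⟩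
  rw [positions, card_equiv (t := univ ×ˢ {i}) finProdFinEquiv.symm (by simp [eq_comm])]
  simp

lemma comp_perm_mem_wordFinset {w : Fin (m * n) → Fin n} (σ : Equiv.Perm (Fin (m * n))) :
    w ∘ σ ∈ wordFinset m n ↔ w ∈ wordFinset m n := by
  simp [mem_wordFinset, positions_comp_perm]

lemma card_filter_map_positions (σ : Equiv.Perm (Fin (m * n)))
    (Q : (Fin n → Finset (Fin (m * n))) → Prop) [DecidablePred Q] :
    #{w ∈ wordFinset m n | Q fun i => (positions w i).map σ.toEmbedding}
      = #{w ∈ wordFinset m n | Q (positions w)} := by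
  have hpos (w : Fin (m * n) → Fin n) :
      positions (w ∘ σ.symm) = fun i => (positions w i).map σ.toEmbedding := by
    ext1 i; simp [positions_comp_perm]
  refine card_nbij' (· ∘ σ.symm) (· ∘ σ) (fun w hw => ?_) (fun w hw => ?_)
    (fun w _ => by simp [Function.comp_assoc]) (fun w _ => by simp [Function.comp_assoc])
  · simp only [mem_coe, mem_filter] at hw ⊢
    exact ⟨(comp_perm_mem_wordFinset _).mpr hw.1, hpos w ▸ hw.2⟩
  · simp only [mem_coe, mem_filter] at hw ⊢
    refine ⟨(comp_perm_mem_wordFinset _).mpr hw.1, ?_⟩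
    simpa [positions_comp_perm, map_map] using hw.2

lemma card_filter_positions_eq_of_card_eq (i : Fin n) {A A' : Finset (Fin (m * n))} (h : #A = #A') :
    #{w ∈ wordFinset m n | positions w i = A} = #{w ∈ wordFinset m n | positions w i = A'} := by
  obtain ⟨σ, rfl⟩ := Equiv.Perm.exists_map_finset_eq A A' h
  simpa using (card_filter_map_positions σ fun P => P i = A.map σ.toEmbedding)

lemma card_filter_positions_eq_and_eq_of_card_eq (i j : Fin n) {A B A' B' : Finset (Fin (m * n))}
    (hA : #A = #A') (hB : #B = #B') (hAB : Disjoint A B) (hAB' : Disjoint A' B') :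
    #{w ∈ wordFinset m n | positions w i = A ∧ positions w j = B}
      = #{w ∈ wordFinset m n | positions w i = A' ∧ positions w j = B'} := by
  obtain ⟨σ, rfl, rfl⟩ := Equiv.Perm.exists_map_finset_eq_of_disjoint hA hB hAB hAB'
  simpa using (card_filter_map_positions σ
    fun P => P i = A.map σ.toEmbedding ∧ P j = B.map σ.toEmbedding)

lemma card_filter_positions_subset (i : Fin n) (D : Finset (Fin (m * n)))
    {A : Finset (Fin (m * n))} (hA : #A = m) :
    #{w ∈ wordFinset m n | positions w i ⊆ D}
      = (#D).choose m * #{w ∈ wordFinset m n | positions w i = A} := by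
  rw [card_eq_sum_card_fiberwise (f := fun w => positions w i) (t := powersetCard m D),
    ← card_powersetCard]
  · refine sum_const_nat fun B hB => ?_
    rw [mem_powersetCard] at hB
    rw [filter_filter, card_filter_positions_eq_of_card_eq i (hB.2.trans hA.symm).symm]
    congr 1
    exact filter_congr fun w _ => ⟨fun h => h.2, fun h => ⟨h ▸ hB.1, h⟩⟩
  · intro w hw
    simp only [coe_filter] at hw
    exact mem_powersetCard.mpr ⟨hw.2, mem_wordFinset.mp hw.1 i⟩

lemma card_filter_positions_subset_mul (i : Fin n) (D : Finset (Fin (m * n))) :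
    #{w ∈ wordFinset m n | positions w i ⊆ D} * (m * n).choose m
      = (#D).choose m * #(wordFinset m n) := by
  obtain ⟨A, -, hA⟩ := exists_subset_card_eq (s := (univ : Finset (Fin (m * n))))
    (by simpa using Nat.le_mul_of_pos_right m i.pos)
  have huniv := card_filter_positions_subset i univ hA
  rw [filter_true_of_mem fun w _ => subset_univ _, card_univ, Fintype.card_fin] at huniv
  rw [card_filter_positions_subset i D hA, huniv]
  ring

lemma card_filter_positions_subset_and (D : Finset (Fin (m * n))) {i j : Fin n} (hij : i ≠ j)
    {A B : Finset (Fin (m * n))} (hA : #A = m) (hB : #B = m) (hAB : Disjoint A B) :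
    #{w ∈ wordFinset m n | positions w i ⊆ D ∧ positions w j ⊆ D}
      = (#D).choose m * (#D - m).choose m
        * #{w ∈ wordFinset m n | positions w i = A ∧ positions w j = B} := by
  rw [card_eq_sum_card_fiberwise (f := fun w => (positions w i, positions w j))
    (t := {q ∈ powersetCard m D ×ˢ powersetCard m D | Disjoint q.1 q.2}),
    ← card_filter_disjoint_powersetCard]
  · refine sum_const_nat fun q hq => ?_
    simp only [mem_filter, mem_product, mem_powersetCard] at hq
    rw [filter_filter, ← card_filter_positions_eq_and_eq_of_card_eq i j (hq.1.1.2.trans hA.symm)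
      (hq.1.2.2.trans hB.symm) hq.2 hAB]
    congr 1
    refine filter_congr fun w _ => ?_
    rw [Prod.ext_iff]
    exact ⟨fun h => h.2, fun h => ⟨⟨h.1 ▸ hq.1.1.1, h.2 ▸ hq.1.2.1⟩, h⟩⟩
  · intro w hw
    simp only [coe_filter, mem_product, mem_powersetCard] at hw ⊢
    exact ⟨⟨⟨hw.2.1, mem_wordFinset.mp hw.1 i⟩, ⟨hw.2.2, mem_wordFinset.mp hw.1 j⟩⟩,
      disjoint_positions w hij⟩

lemma card_filter_positions_subset_and_mul_le (D : Finset (Fin (m * n))) {i j : Fin n}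
    (hij : i ≠ j) :
    #{w ∈ wordFinset m n | positions w i ⊆ D ∧ positions w j ⊆ D} * (m * n).choose m ^ 2
      ≤ (#D).choose m ^ 2 * #(wordFinset m n) := by
  have hn : 2 ≤ n := by have := Fin.val_ne_of_ne hij; omega
  have h2m : m + m ≤ m * n := by nlinarith
  obtain ⟨A, -, hA⟩ := exists_subset_card_eq (s := (univ : Finset (Fin (m * n)))) (n := m)
    (by rw [card_univ, Fintype.card_fin]; omega)
  obtain ⟨B, hBA, hB⟩ := exists_subset_card_eq (s := univ \ A) (n := m)
    (by rw [card_sdiff_of_subset (subset_univ _), card_univ, Fintype.card_fin]; omega)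
  have hAB : Disjoint A B := disjoint_of_subset_right hBA disjoint_sdiff
  have huniv := card_filter_positions_subset_and univ hij hA hB hAB
  rw [filter_true_of_mem fun w _ => ⟨subset_univ _, subset_univ _⟩, card_univ,
    Fintype.card_fin] at huniv
  have hcross := Nat.choose_sub_mul_choose_le (card_le_univ D) m
  rw [Fintype.card_fin] at hcross
  refine Nat.le_of_mul_le_mul_right ?_ (Nat.choose_pos (by omega : m ≤ m * n - m))
  rw [card_filter_positions_subset_and D hij hA hB hAB, huniv]
  set K := #{w ∈ wordFinset m n | positions w i = A ∧ positions w j = B}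
  calc (#D).choose m * (#D - m).choose m * K * (m * n).choose m ^ 2 * (m * n - m).choose m
      = (#D).choose m * ((#D - m).choose m * (m * n).choose m)
          * ((m * n).choose m * (m * n - m).choose m * K) := by ring
    _ ≤ (#D).choose m * ((#D).choose m * (m * n - m).choose m)
          * ((m * n).choose m * (m * n - m).choose m * K) := by gcongr
    _ = _ := by ring

lemma sum_card_completedLetters_mul (D : Finset (Fin (m * n))) :
    (∑ w ∈ wordFinset m n, #(completedLetters w D)) * (m * n).choose m
      = n * (#D).choose m * #(wordFinset m n) := by
  rw [sum_card_completedLetters, sum_mul,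
    sum_congr rfl fun i _ => card_filter_positions_subset_mul i D, sum_const, card_univ,
    Fintype.card_fin, smul_eq_mul, mul_assoc]

lemma sum_card_completedLetters_sq_mul_le (D : Finset (Fin (m * n))) :
    (∑ w ∈ wordFinset m n, #(completedLetters w D) ^ 2) * (m * n).choose m ^ 2
      ≤ (∑ w ∈ wordFinset m n, #(completedLetters w D)) * (m * n).choose m ^ 2
        + n ^ 2 * (#D).choose m ^ 2 * #(wordFinset m n) := by
  rw [sum_card_completedLetters_sq, sum_card_completedLetters, sum_mul, sum_mul]
  calc ∑ i, (∑ j, #{w ∈ wordFinset m n | positions w i ⊆ D ∧ positions w j ⊆ D})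
        * (m * n).choose m ^ 2
      ≤ ∑ i : Fin n, (#{w ∈ wordFinset m n | positions w i ⊆ D} * (m * n).choose m ^ 2
          + n * ((#D).choose m ^ 2 * #(wordFinset m n))) := by
        gcongr with i
        rw [sum_mul, ← add_sum_erase _ _ (mem_univ i)]
        simp only [and_self]
        gcongr
        calc _ ≤ ∑ j ∈ univ.erase i, (#D).choose m ^ 2 * #(wordFinset m n) :=
              sum_le_sum fun j hj =>
                card_filter_positions_subset_and_mul_le D (ne_of_mem_erase hj).symm
          _ ≤ n * ((#D).choose m ^ 2 * #(wordFinset m n)) := by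
              rw [sum_const, smul_eq_mul, card_erase_of_mem (mem_univ i), card_univ,
                Fintype.card_fin]
              gcongr
              exact Nat.sub_le n 1
    _ = _ := by
        rw [sum_add_distrib, sum_const, card_univ, Fintype.card_fin, smul_eq_mul]
        ring

def firstPositions (N s : ℕ) : Finset (Fin N) := {p | (p : ℕ) < s}

lemma card_firstPositions {N s : ℕ} (h : s ≤ N) : #(firstPositions N s) = s := by
  rw [firstPositions, Fin.card_filter_val_lt, min_eq_right h]

lemma le_card_filter_lt_and_iff {w : Fin (m * n) → Fin n} (hw : w ∈ wordFinset m n)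
    (i : Fin n) (t : ℕ) :
    m ≤ #{p : Fin (m * n) | (p : ℕ) < t ∧ w p = i}
      ↔ positions w i ⊆ firstPositions (m * n) t := by
  have hfilter : ({p : Fin (m * n) | (p : ℕ) < t ∧ w p = i} : Finset _)
      = (positions w i).filter fun p : Fin (m * n) => (p : ℕ) < t := by
    ext p; simp only [positions, mem_filter, mem_univ, true_and]; tauto
  have hcard : #(positions w i) = m := mem_wordFinset.mp hw i
  rw [hfilter]
  calc m ≤ #{p ∈ positions w i | p.val < t}
        ↔ #{p ∈ positions w i | p.val < t} = #(positions w i) :=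
        ⟨fun h => (card_filter_le _ _).antisymm (hcard.trans_le h), fun h => (h.trans hcard).ge⟩
    _ ↔ _ := by
        rw [card_filter_eq_iff]
        simp [subset_iff, firstPositions]

lemma Tstat_le_iff (hn : 0 < n) {w : Fin (m * n) → Fin n} (hw : w ∈ wordFinset m n) (s : ℕ) :
    Tstat m n w ≤ s ↔ ∃ i, positions w i ⊆ firstPositions (m * n) s := by
  simp only [Tstat, le_card_filter_lt_and_iff hw]
  refine ⟨fun h => ?_, fun ⟨i, hi⟩ => Nat.sInf_le ⟨i, hi⟩⟩
  have hne : {t : ℕ | ∃ i, positions w i ⊆ firstPositions (m * n) t}.Nonempty :=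
    ⟨m * n, ⟨0, hn⟩, fun p _ => by simp [firstPositions]⟩
  obtain ⟨i, hi⟩ := Nat.sInf_mem hne
  refine ⟨i, hi.trans fun p hp => ?_⟩
  rw [firstPositions, mem_filter] at hp ⊢
  exact ⟨hp.1, hp.2.trans_le h⟩

lemma Tstat_le (hn : 0 < n) {w : Fin (m * n) → Fin n} (hw : w ∈ wordFinset m n) :
    Tstat m n w ≤ m * n :=
  (Tstat_le_iff hn hw _).mpr ⟨⟨0, hn⟩, fun p _ => by simp [firstPositions]⟩

lemma completedLetters_nonempty_iff {w : Fin (m * n) → Fin n} {D : Finset (Fin (m * n))} :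
    (completedLetters w D).Nonempty ↔ ∃ i, positions w i ⊆ D := by
  simp [completedLetters, Finset.Nonempty]

lemma card_Tstat_le_mul_le (hn : 0 < n) {s : ℕ} (hs : s ≤ m * n) :
    #{w ∈ wordFinset m n | Tstat m n w ≤ s} * (m * n).choose m
      ≤ n * s.choose m * #(wordFinset m n) := by
  have hsum := sum_card_completedLetters_mul (firstPositions (m * n) s)
  rw [card_firstPositions hs] at hsum
  rw [← hsum]
  gcongr
  calc #{w ∈ wordFinset m n | Tstat m n w ≤ s}
      = ∑ w ∈ wordFinset m n with Tstat m n w ≤ s, 1 := card_eq_sum_ones _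
    _ ≤ ∑ w ∈ wordFinset m n with Tstat m n w ≤ s,
          #(completedLetters w (firstPositions (m * n) s)) := by
        refine sum_le_sum fun w hw => ?_
        obtain ⟨hwS, hT⟩ := mem_filter.mp hw
        rw [Tstat_le_iff hn hwS, ← completedLetters_nonempty_iff] at hT
        exact card_pos.mpr hT
    _ ≤ ∑ w ∈ wordFinset m n, #(completedLetters w (firstPositions (m * n) s)) :=
        sum_le_sum_of_subset (filter_subset _ _)

lemma sum_card_completedLetters_sq_mul_card_le (hn : 0 < n) (D : Finset (Fin (m * n))) :
    (∑ w ∈ wordFinset m n, #(completedLetters w D) ^ 2) * #(wordFinset m n)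
      ≤ (∑ w ∈ wordFinset m n, #(completedLetters w D)) * #(wordFinset m n)
        + (∑ w ∈ wordFinset m n, #(completedLetters w D)) ^ 2 := by
  set a := ∑ w ∈ wordFinset m n, #(completedLetters w D)
  set N := #(wordFinset m n)
  set C := (m * n).choose m
  have ha : a * C = n * (#D).choose m * N := sum_card_completedLetters_mul D
  have hC : 0 < C ^ 2 := pow_pos (Nat.choose_pos (Nat.le_mul_of_pos_right m hn)) 2
  refine Nat.le_of_mul_le_mul_right ?_ hC
  calc (∑ w ∈ wordFinset m n, #(completedLetters w D) ^ 2) * N * C ^ 2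
      = (∑ w ∈ wordFinset m n, #(completedLetters w D) ^ 2) * C ^ 2 * N := by ring
    _ ≤ (a * C ^ 2 + n ^ 2 * (#D).choose m ^ 2 * N) * N :=
        Nat.mul_le_mul_right _ (sum_card_completedLetters_sq_mul_le D)
    _ = (a * N + a ^ 2) * C ^ 2 := by rw [add_mul, add_mul, ← mul_pow a, ha]; ring

lemma card_lt_Tstat_mul_le (hn : 0 < n) {s : ℕ} (hs : s ≤ m * n) :
    #{w ∈ wordFinset m n | s < Tstat m n w} * (n * s.choose m)
      ≤ (m * n).choose m * #(wordFinset m n) := by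
  set D := firstPositions (m * n) s
  set a := ∑ w ∈ wordFinset m n, #(completedLetters w D)
  set N := #(wordFinset m n)
  have ha : a * (m * n).choose m = n * s.choose m * N := by
    rw [← card_firstPositions hs]; exact sum_card_completedLetters_mul D
  have hzero : {w ∈ wordFinset m n | s < Tstat m n w}
      = {w ∈ wordFinset m n | (#(completedLetters w D) : ℝ) = 0} := by
    refine filter_congr fun w hw => ?_
    rw [← not_le, Tstat_le_iff hn hw, ← completedLetters_nonempty_iff, Nat.cast_eq_zero,
      card_eq_zero, not_nonempty_iff_eq_empty]
  have hmoment : #{w ∈ wordFinset m n | s < Tstat m n w} * a ≤ N ^ 2 := by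
    have := card_filter_eq_zero_mul_sum_le (fun _ _ => Nat.cast_nonneg _)
      (by exact_mod_cast sum_card_completedLetters_sq_mul_card_le hn D)
    rw [← hzero] at this
    exact_mod_cast this
  refine Nat.le_of_mul_le_mul_right ?_ (card_pos.mpr wordFinset_nonempty : 0 < N)
  calc #{w ∈ wordFinset m n | s < Tstat m n w} * (n * s.choose m) * N
      = #{w ∈ wordFinset m n | s < Tstat m n w} * a * (m * n).choose m := by
        rw [mul_assoc _ a, ha]; ring
    _ ≤ N ^ 2 * (m * n).choose m := Nat.mul_le_mul_right _ hmoment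
    _ = (m * n).choose m * N * N := by ring

lemma card_Tstat_le_mul_pow_le (hm : 0 < m) (hn : 0 < n) {s : ℕ} (hs : s ≤ m * n) :
    #{w ∈ wordFinset m n | Tstat m n w ≤ s} * n ^ (m - 1) ≤ s ^ m * #(wordFinset m n) := by
  have hpow : n ^ m = n * n ^ (m - 1) := by rw [← pow_succ']; congr; omega
  have hnm : n ≤ m * n + 1 - m := by
    have : m + n ≤ m * n + 1 := by nlinarith
    omega
  refine Nat.le_of_mul_le_mul_right ?_ (Nat.choose_pos (Nat.le_mul_of_pos_right m hn))
  calc #{w ∈ wordFinset m n | Tstat m n w ≤ s} * n ^ (m - 1) * (m * n).choose m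
      = #{w ∈ wordFinset m n | Tstat m n w ≤ s} * (m * n).choose m * n ^ (m - 1) := by ring
    _ ≤ n * s.choose m * #(wordFinset m n) * n ^ (m - 1) :=
        Nat.mul_le_mul_right _ (card_Tstat_le_mul_le hn hs)
    _ = n ^ m * s.choose m * #(wordFinset m n) := by rw [hpow]; ring
    _ ≤ (m * n + 1 - m) ^ m * s.choose m * #(wordFinset m n) := by gcongr
    _ ≤ s ^ m * (m * n).choose m * #(wordFinset m n) :=
        Nat.mul_le_mul_right _ (Nat.pow_sub_mul_choose_le (m * n) s m)
    _ = s ^ m * #(wordFinset m n) * (m * n).choose m := by ring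

lemma card_lt_Tstat_mul_pow_le (hm : 0 < m) (hn : 0 < n) {s : ℕ} (hs : s ≤ m * n) :
    #{w ∈ wordFinset m n | s < Tstat m n w} * (s + 1 - m) ^ m
      ≤ m ^ m * n ^ (m - 1) * #(wordFinset m n) := by
  have hpow : n ^ m = n * n ^ (m - 1) := by rw [← pow_succ']; congr; omega
  have hC : 0 < (m * n).choose m := Nat.choose_pos (Nat.le_mul_of_pos_right m hn)
  refine Nat.le_of_mul_le_mul_right ?_ (mul_pos hn hC)
  calc #{w ∈ wordFinset m n | s < Tstat m n w} * (s + 1 - m) ^ m * (n * (m * n).choose m)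
      = #{w ∈ wordFinset m n | s < Tstat m n w} * n * ((s + 1 - m) ^ m * (m * n).choose m) := by
        ring
    _ ≤ #{w ∈ wordFinset m n | s < Tstat m n w} * n * ((m * n) ^ m * s.choose m) :=
        Nat.mul_le_mul_left _ (Nat.pow_sub_mul_choose_le s (m * n) m)
    _ = (m * n) ^ m * (#{w ∈ wordFinset m n | s < Tstat m n w} * (n * s.choose m)) := by ring
    _ ≤ (m * n) ^ m * ((m * n).choose m * #(wordFinset m n)) :=
        Nat.mul_le_mul_left _ (card_lt_Tstat_mul_le hn hs)
    _ = m ^ m * n ^ (m - 1) * #(wordFinset m n) * (n * (m * n).choose m) := by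
        rw [mul_pow, hpow]; ring

lemma sum_Tstat_eq_sum_card (hn : 0 < n) :
    ∑ w ∈ wordFinset m n, (Tstat m n w : ℝ)
      = ∑ s ∈ range (m * n), (#{w ∈ wordFinset m n | s < Tstat m n w} : ℝ) := by
  exact_mod_cast sum_eq_sum_range_card_filter_lt fun _ hw => Tstat_le hn hw

lemma card_wordFinset_le_two_mul_card_lt_Tstat {x : ℝ} (hm : 0 < m) (hn : 0 < n)
    (hx : x ^ m = n ^ (m - 1)) {s : ℕ} (hs : s ≤ m * n) (hsx : (s : ℝ) ≤ x / 2) :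
    (#(wordFinset m n) : ℝ) ≤ 2 * #{w ∈ wordFinset m n | s < Tstat m n w} := by
  have hxm : 0 < x ^ m := hx ▸ pow_pos (by exact_mod_cast hn) _
  have hsplit : (#{w ∈ wordFinset m n | s < Tstat m n w} : ℝ)
      + #{w ∈ wordFinset m n | Tstat m n w ≤ s} = #(wordFinset m n) := by
    exact_mod_cast (by simpa only [not_lt] using
      card_filter_add_card_filter_not (s := wordFinset m n) fun w => s < Tstat m n w)
  have hpow : (s : ℝ) ^ m ≤ x ^ m / 2 :=
    calc (s : ℝ) ^ m ≤ (x / 2) ^ m := by gcongr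
      _ = x ^ m / 2 ^ m := div_pow _ _ _
      _ ≤ x ^ m / 2 := by gcongr; exact le_self_pow₀ (by norm_num) hm.ne'
  have hle : (#{w ∈ wordFinset m n | Tstat m n w ≤ s} : ℝ) * x ^ m
      ≤ #(wordFinset m n) / 2 * x ^ m :=
    calc (#{w ∈ wordFinset m n | Tstat m n w ≤ s} : ℝ) * x ^ m
        ≤ s ^ m * #(wordFinset m n) := by
          rw [hx]; exact_mod_cast card_Tstat_le_mul_pow_le hm hn hs
      _ ≤ x ^ m / 2 * #(wordFinset m n) := by gcongr
      _ = #(wordFinset m n) / 2 * x ^ m := by ring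
  linarith [le_of_mul_le_mul_right hle hxm]

lemma mul_card_le_sum_Tstat {x : ℝ} (hm : 0 < m) (hx : x ^ m = n ^ (m - 1)) (hx4 : 4 ≤ x)
    (hxn : x ≤ n) :
    x / 8 * #(wordFinset m n) ≤ ∑ w ∈ wordFinset m n, (Tstat m n w : ℝ) := by
  have hn : 0 < n := by exact_mod_cast (by linarith : (0 : ℝ) < n)
  set t := ⌊x / 2⌋₊
  have ht : (t : ℝ) ≤ x / 2 := Nat.floor_le (by linarith)
  have htmn : t ≤ m * n :=
    (Nat.cast_le.mp (by linarith : (t : ℝ) ≤ n)).trans (Nat.le_mul_of_pos_left n hm)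
  calc x / 8 * #(wordFinset m n) ≤ t * ((#(wordFinset m n) : ℝ) / 2) := by
        nlinarith [Nat.lt_floor_add_one (x / 2),
          (Nat.cast_nonneg _ : (0 : ℝ) ≤ #(wordFinset m n))]
    _ = ∑ _s ∈ range t, (#(wordFinset m n) : ℝ) / 2 := by simp
    _ ≤ ∑ s ∈ range t, (#{w ∈ wordFinset m n | s < Tstat m n w} : ℝ) := by
        refine sum_le_sum fun s hs => ?_
        have hst : s < t := mem_range.mp hs
        linarith [card_wordFinset_le_two_mul_card_lt_Tstat hm hn hx (hst.le.trans htmn)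
          (le_trans (by exact_mod_cast hst.le) ht)]
    _ ≤ ∑ s ∈ range (m * n), (#{w ∈ wordFinset m n | s < Tstat m n w} : ℝ) :=
        sum_le_sum_of_subset_of_nonneg (range_subset_range.mpr htmn) fun _ _ _ => by positivity
    _ = _ := (sum_Tstat_eq_sum_card hn).symm

lemma card_lt_Tstat_le_div_pow {x : ℝ} (hm : 0 < m) (hn : 0 < n) (hx : x ^ m = n ^ (m - 1))
    {s : ℕ} (hs : s ≤ m * n) (hms : 2 * m ≤ s) :
    (#{w ∈ wordFinset m n | s < Tstat m n w} : ℝ)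
      ≤ (2 * m) ^ m * x ^ m * #(wordFinset m n) / s ^ m := by
  have hcount : (#{w ∈ wordFinset m n | s < Tstat m n w} : ℝ) * ((s + 1 - m : ℕ) : ℝ) ^ m
      ≤ m ^ m * x ^ m * #(wordFinset m n) := by
    rw [hx]; exact_mod_cast card_lt_Tstat_mul_pow_le hm hn hs
  have hhalf : (s : ℝ) / 2 ≤ ((s + 1 - m : ℕ) : ℝ) := by
    have : (2 * m : ℝ) ≤ s := by exact_mod_cast hms
    rw [Nat.cast_sub (by omega)]
    push_cast
    linarith
  rw [le_div_iff₀ (pow_pos (by exact_mod_cast (by omega : 0 < s)) m)]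
  calc (#{w ∈ wordFinset m n | s < Tstat m n w} : ℝ) * s ^ m
      = 2 ^ m * ((#{w ∈ wordFinset m n | s < Tstat m n w} : ℝ) * (s / 2) ^ m) := by
        rw [div_pow]; field_simp
    _ ≤ 2 ^ m * (m ^ m * x ^ m * #(wordFinset m n)) := by
        refine mul_le_mul_of_nonneg_left (le_trans ?_ hcount) (by positivity)
        gcongr
    _ = (2 * m) ^ m * x ^ m * #(wordFinset m n) := by ring

lemma sum_Tstat_le_mul_card {x : ℝ} (hm : 2 ≤ m) (hn : 0 < n) (hx : x ^ m = n ^ (m - 1))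
    (hx1 : 1 ≤ x) :
    ∑ w ∈ wordFinset m n, (Tstat m n w : ℝ)
      ≤ (2 * m + 3 + 2 * (2 * m) ^ m) * x * #(wordFinset m n) := by
  set k := ⌈x⌉₊ + 2 * m
  have hk : x ≤ k + 1 := by simp only [k]; push_cast; linarith [Nat.le_ceil x]
  have hk' : (k : ℝ) + 1 ≤ (2 * m + 3) * x := by
    simp only [k]; push_cast; nlinarith [Nat.ceil_lt_add_one (by linarith : 0 ≤ x)]
  have hsum := sum_range_le_of_le_div_pow (M := m * n) (k := k) hm (by positivity)
    (Nat.cast_nonneg #(wordFinset m n)) (fun s _ => by exact_mod_cast card_filter_le _ _)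
    fun s hs hks => card_lt_Tstat_le_div_pow (by omega) hn hx hs.le (by omega)
  have hx' : x ^ m / ((k : ℝ) + 1) ^ (m - 1) ≤ x := by
    rw [div_le_iff₀ (by positivity), ← Nat.sub_add_cancel (by omega : 1 ≤ m), pow_succ',
      Nat.add_sub_cancel]
    gcongr
  rw [sum_Tstat_eq_sum_card hn]
  calc _ ≤ ((k : ℝ) + 1) * #(wordFinset m n)
        + 2 * ((2 * m) ^ m * x ^ m * #(wordFinset m n)) / ((k : ℝ) + 1) ^ (m - 1) := hsum
    _ = ((k : ℝ) + 1) * #(wordFinset m n)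
        + 2 * (2 * m) ^ m * #(wordFinset m n) * (x ^ m / ((k : ℝ) + 1) ^ (m - 1)) := by ring
    _ ≤ (2 * m + 3) * x * #(wordFinset m n) + 2 * (2 * m) ^ m * #(wordFinset m n) * x := by
        gcongr
    _ = _ := by ring

end Words

lemma Real.rpow_one_sub_inv_pow {y : ℝ} (hy : 0 ≤ y) {m : ℕ} (hm : 0 < m) :
    (y ^ (1 - 1 / (m : ℝ))) ^ m = y ^ (m - 1) := by
  rw [← rpow_mul_natCast hy, ← rpow_natCast, Nat.cast_sub hm, Nat.cast_one]
  congr 1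
  field_simp

theorem stmt_14 (m : ℕ) (hm : 2 ≤ m) :
    ∃ c₁ c₂ : ℝ, 0 < c₁ ∧ 0 < c₂ ∧ ∃ n₀ : ℕ, ∀ n : ℕ, n₀ ≤ n →
      c₁ * (n : ℝ) ^ ((1 : ℝ) - 1 / m) ≤
          (∑ w ∈ wordFinset m n, (Tstat m n w : ℝ)) / ((wordFinset m n).card : ℝ) ∧
      (∑ w ∈ wordFinset m n, (Tstat m n w : ℝ)) / ((wordFinset m n).card : ℝ) ≤
          c₂ * (n : ℝ) ^ ((1 : ℝ) - 1 / m) := by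
  refine ⟨1 / 8, 2 * m + 3 + 2 * (2 * m) ^ m, by norm_num, by positivity, 16, fun n hn => ?_⟩
  have hn1 : (1 : ℝ) ≤ n := by exact_mod_cast (by omega : 1 ≤ n)
  have hexp : (1 : ℝ) / 2 ≤ 1 - 1 / (m : ℝ) := by
    have : (1 : ℝ) / m ≤ 1 / 2 := by gcongr; exact_mod_cast hm
    linarith
  have hx := Real.rpow_one_sub_inv_pow (by linarith : (0 : ℝ) ≤ n) (by omega : 0 < m)
  have hx4 : 4 ≤ (n : ℝ) ^ (1 - 1 / (m : ℝ)) :=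
    calc (4 : ℝ) = 16 ^ ((1 : ℝ) / 2) := by
          rw [show (16 : ℝ) = 4 ^ (2 : ℝ) by norm_num, ← Real.rpow_mul (by norm_num)]
          norm_num
      _ ≤ (n : ℝ) ^ ((1 : ℝ) / 2) := by gcongr; exact_mod_cast hn
      _ ≤ (n : ℝ) ^ (1 - 1 / (m : ℝ)) := Real.rpow_le_rpow_of_exponent_le hn1 hexp
  have hxn : (n : ℝ) ^ (1 - 1 / (m : ℝ)) ≤ n :=
    (Real.rpow_le_rpow_of_exponent_le hn1 (by simp)).trans_eq (Real.rpow_one _)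
  have hN : (0 : ℝ) < #(wordFinset m n) := by exact_mod_cast card_pos.mpr wordFinset_nonempty
  constructor
  · rw [le_div_iff₀ hN]
    linarith [mul_card_le_sum_Tstat (by omega) hx hx4 hxn]
  · rw [div_le_iff₀ hN]
    exact sum_Tstat_le_mul_card hm (by omega) hx (by linarith)
end

section
/- Let L(π), for π ∈ S_{m,n}, be the largest integer p such that there exist indices i_1 < i_2 < ... < i_p with π_{i_j} = j for all 1 ≤ j ≤ p. If the partial-feedback guessing bound P⁺_{m,n} ≤ m + E(m) holds (for some error function E), then E[L(π)] ≤ m + E(m) for π uniform on S_{m,n}; in particular, the strategy of guessing 1 until correct, then 2 until correct, etc., achieves at least L(π) correct guesses in the partial feedback game on π. -/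
/-- Given a (deterministic adaptive) strategy `G` mapping feedback histories to guesses,
`guessesOf n G y` is the sequence of guesses made when the feedback received is `y`. -/
def guessesOf (n : ℕ) (G : List Bool → Fin n) (y : List Bool) : List (Fin n) :=
  (List.range y.length).map (fun s => G (y.take s))

/-- `fb m n G w t` is the list of feedback bits received during the first `t` steps of the
partial feedback game when the deck is `w` and the guesser plays strategy `G`. -/
def fb (m n : ℕ) (G : List Bool → Fin n) (w : Fin (m * n) → Fin n) : ℕ → List Bool
  | 0 => []
  | t + 1 =>
    fb m n G w t ++ [if h : t < m * n then decide (w ⟨t, h⟩ = G (fb m n G w t)) else true]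

/-- `Lstat m n w` is the largest `p` such that `w` contains `1, 2, …, p` (0-indexed:
`0, 1, …, p-1`) as a subsequence, the `j`-th found entry having value `j`. -/
noncomputable def Lstat (m n : ℕ) (w : Fin (m * n) → Fin n) : ℕ :=
  sSup {p : ℕ | ∃ hp : p ≤ n, ∃ f : Fin p → Fin (m * n), StrictMono f ∧
    ∀ j : Fin p, w (f j) = ⟨j.1, lt_of_lt_of_le j.2 hp⟩}

def seqStrategy (n : ℕ) (hn : 0 < n) (y : List Bool) : Fin n :=
  ⟨min (y.countP id) (n - 1), (min_le_right _ _).trans_lt (Nat.sub_lt hn Nat.one_pos)⟩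

section Score

variable {m n : ℕ} (G : List Bool → Fin n) (w : Fin (m * n) → Fin n)

theorem countP_fb_succ {t : ℕ} (ht : t < m * n) :
    (fb m n G w (t + 1)).countP id =
      (fb m n G w t).countP id + if w ⟨t, ht⟩ = G (fb m n G w t) then 1 else 0 := by
  simp [fb, List.countP_append, ht]

theorem monotone_countP_fb : Monotone fun t => (fb m n G w t).countP id :=
  monotone_nat_of_le_succ fun t => by simp [fb, List.countP_append]

end Score

section Sequential

variable {m n : ℕ} (hn : 0 < n) {w : Fin (m * n) → Fin n}

theorem succ_le_countP_fb_seqStrategy {t : Fin (m * n)} {j : ℕ} (hwt : (w t : ℕ) = j)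
    (hj : j ≤ (fb m n (seqStrategy n hn) w t).countP id) :
    j + 1 ≤ (fb m n (seqStrategy n hn) w (t + 1)).countP id := by
  rcases hj.lt_or_eq with hlt | rfl
  · exact hlt.trans_le (monotone_countP_fb _ w t.1.le_succ)
  · have hcorrect : w t = seqStrategy n hn (fb m n (seqStrategy n hn) w t) :=
      Fin.ext (by simp only [seqStrategy]; omega)
    rw [countP_fb_succ _ w t.2, if_pos hcorrect]

theorem le_countP_fb_seqStrategy_of_strictMono {p : ℕ} {f : Fin p → Fin (m * n)}
    (hf : StrictMono f) (hw : ∀ j, (w (f j) : ℕ) = j) :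
    p ≤ (fb m n (seqStrategy n hn) w (m * n)).countP id := by
  have hscore : ∀ j (hj : j < p),
      j + 1 ≤ (fb m n (seqStrategy n hn) w (f ⟨j, hj⟩ + 1)).countP id := by
    intro j
    induction j with
    | zero => exact fun hj => succ_le_countP_fb_seqStrategy hn (hw _) (Nat.zero_le _)
    | succ j ih =>
      intro hj
      have hlt : (f ⟨j, j.lt_succ_self.trans hj⟩ : ℕ) + 1 ≤ f ⟨j + 1, hj⟩ :=
        hf (Fin.mk_lt_mk.mpr j.lt_succ_self)
      exact succ_le_countP_fb_seqStrategy hn (hw _)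
        ((ih _).trans (monotone_countP_fb _ w hlt))
  rcases Nat.eq_zero_or_pos p with rfl | hp
  · exact Nat.zero_le _
  calc p = (p - 1) + 1 := by omega
    _ ≤ _ := hscore (p - 1) (by omega)
    _ ≤ _ := monotone_countP_fb _ w (f ⟨p - 1, by omega⟩).2

theorem Lstat_le_countP_fb_seqStrategy (w : Fin (m * n) → Fin n) :
    Lstat m n w ≤ (fb m n (seqStrategy n hn) w (m * n)).countP id :=
  csSup_le' fun _ ⟨_, _, hf, hw⟩ =>
    le_countP_fb_seqStrategy_of_strictMono hn hf fun j => congrArg Fin.val (hw j)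

end Sequential

theorem stmt_19 (m n : ℕ) (hn : 0 < n) (E : ℝ) :
    -- the sequential strategy (guess `1` until correct, then `2` until correct, …)
    -- always gets at least `L(w)` correct guesses:
    (∀ w ∈ wordFinset m n,
      Lstat m n w ≤
        (fb m n (fun y => ⟨min (y.countP id) (n - 1), by omega⟩) w (m * n)).countP id) ∧
    -- hence a bound `P⁺_{m,n} ≤ m + E` implies `𝔼[L] ≤ m + E`:
    ((∀ G : List Bool → Fin n,
        (∑ w ∈ wordFinset m n, ((fb m n G w (m * n)).countP id : ℝ)) /
            ((wordFinset m n).card : ℝ) ≤ (m : ℝ) + E) →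
      (∑ w ∈ wordFinset m n, (Lstat m n w : ℝ)) / ((wordFinset m n).card : ℝ) ≤
        (m : ℝ) + E) := by
  refine ⟨fun w _ => Lstat_le_countP_fb_seqStrategy hn w,
    fun hP => le_trans ?_ (hP (seqStrategy n hn))⟩
  gcongr with w
  exact_mod_cast Lstat_le_countP_fb_seqStrategy hn w
end
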